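/- arXiv:1202.5478 — 5 statements merged into one kernel-verified Lean document; each statement's English description precedes it below -/
import Mathlib

section
/- Let E be a directed graph, I an ideal of a ring containing the vertices of E such that I ∩ E^0 is hereditary and saturated, and let v ∈ E^0. Then the set (I ∩ E^0) ∪ (E^0 \ T(v)) is saturated, where T(v) is the tree of v. More precisely: if H ⊆ E^0 is hereditary and saturated and v ∈ E^0, then H ∪ (E^0 \ T(v)) is saturated. -/
structure PaperGraph where
  V : Type
  E : Type
  s : E → V
  r : E → V

namespace PaperGraph

/-- `v ≥ w`: there is a directed path (possibly trivial) from `v` to `w`. -/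
def Reaches (G : PaperGraph) (v w : G.V) : Prop :=
  Relation.ReflTransGen (fun a b => ∃ e : G.E, G.s e = a ∧ G.r e = b) v w

def Hereditary (G : PaperGraph) (X : Set G.V) : Prop :=
  ∀ e : G.E, G.s e ∈ X → G.r e ∈ X

def Saturated (G : PaperGraph) (X : Set G.V) : Prop :=
  ∀ v : G.V, {e : G.E | G.s e = v}.Finite → {e : G.E | G.s e = v}.Nonempty →
    (∀ e : G.E, G.s e = v → G.r e ∈ X) → v ∈ X

/-- The saturation of `X`: the smallest saturated subset containing `X`. -/
def saturation (G : PaperGraph) (X : Set G.V) : Set G.V :=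
  ⋂₀ {S : Set G.V | G.Saturated S ∧ X ⊆ S}

def tree (G : PaperGraph) (v : G.V) : Set G.V := {w | G.Reaches v w}

def MT1 (G : PaperGraph) (M : Set G.V) : Prop :=
  ∀ v w : G.V, w ∈ M → G.Reaches v w → v ∈ M

def MT2 (G : PaperGraph) (M : Set G.V) : Prop :=
  ∀ v ∈ M, {e : G.E | G.s e = v}.Finite → {e : G.E | G.s e = v}.Nonempty →
    ∃ e : G.E, G.s e = v ∧ G.r e ∈ M

def MT3on (G : PaperGraph) (M : Set G.V) : Prop :=
  ∀ v ∈ M, ∀ w ∈ M, ∃ y ∈ M, G.Reaches v y ∧ G.Reaches w y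

def MT3 (G : PaperGraph) : Prop :=
  ∀ v w : G.V, ∃ y : G.V, G.Reaches v y ∧ G.Reaches w y

def Omega (G : PaperGraph) (X : Set G.V) : Set G.V :=
  {w | w ∉ X ∧ ∀ v ∈ X, ¬ G.Reaches w v}

def OmegaV (G : PaperGraph) (v : G.V) : Set G.V :=
  {w | w ≠ v ∧ ¬ G.Reaches w v}

end PaperGraph

namespace PaperGraph

variable {G : PaperGraph}

theorem hereditary_tree (v : G.V) : G.Hereditary (G.tree v) :=
  fun e he => Relation.ReflTransGen.tail he ⟨e, rfl, rfl⟩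

theorem Saturated.union_compl {X Y : Set G.V} (hX : G.Saturated X) (hY : G.Hereditary Y) :
    G.Saturated (X ∪ Yᶜ) := by
  intro u hfin hne hall
  by_cases hu : u ∈ Y
  · refine Or.inl (hX u hfin hne fun e he => ?_)
    exact (hall e he).resolve_right fun hr => hr (hY e (he ▸ hu))
  · exact Or.inr hu

end PaperGraph

theorem union_compl_tree_saturated_general (G : PaperGraph) (H : Set G.V)
    (hsat : G.Saturated H) (v : G.V) :
    G.Saturated (H ∪ (G.tree v)ᶜ) :=
  hsat.union_compl (PaperGraph.hereditary_tree v)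

theorem union_compl_tree_saturated (G : PaperGraph) (H : Set G.V)
    (hher : G.Hereditary H) (hsat : G.Saturated H) (v : G.V) :
    G.Saturated (H ∪ (G.tree v)ᶜ) :=
  union_compl_tree_saturated_general G H hsat v
end

section
/- In a Z-graded ring R, a graded ideal I is prime if and only if it is graded prime, i.e., for all graded ideals J₁, J₂ with J₁J₂ ⊆ I, either J₁ ⊆ I or J₂ ⊆ I. -/
/-!
Suppose `a * r * b ∈ I` for all `r`, but `a, b ∉ I`. Working in `A ⧸ I`, let `a_m` and `b_n` be the
top homogeneous components of `a` and `b` that are not in `I`. For homogeneous `r` of degree `d`,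
the degree `m + d + n` component of `a * r * b` is `a_m * r * b_n` modulo `I`, and it lies in `I`
because `I` is graded; hence `a_m * A * b_n ⊆ I`. The two-sided ideals generated by the homogeneous
elements `a_m` and `b_n` are graded and their product lies in `I`, so graded primeness puts `a_m`
or `b_n` in `I`, a contradiction.
-/

/-- A two-sided ideal of a `ℤ`-graded ring is graded if it contains all homogeneous
components of each of its elements. -/
def TwoSidedIdeal.IsGraded {A : Type} [Ring A] (𝒜 : ℤ → AddSubgroup A) [GradedRing 𝒜]
    (I : TwoSidedIdeal A) : Prop :=
  ∀ x ∈ I, ∀ k : ℤ, (DirectSum.decompose 𝒜 x k : A) ∈ I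

open DirectSum

theorem exists_max_degree_map_decompose_ne_zero {ι A B σ F : Type*} [AddMonoid ι]
    [LinearOrder ι] [Semiring A] [SetLike σ A] [AddSubmonoidClass σ A] (𝒜 : ι → σ)
    [GradedRing 𝒜] [AddCommMonoid B] [FunLike F A B] [AddMonoidHomClass F A B] {f : F} {x : A}
    (hx : f x ≠ 0) : ∃ m, f (decompose 𝒜 x m) ≠ 0 ∧ ∀ i > m, f (decompose 𝒜 x i) = 0 := by
  classical
  set S := (decompose 𝒜 x).support.filter fun i ↦ f (decompose 𝒜 x i) ≠ 0
  have hS : S.Nonempty := by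
    by_contra! hS
    refine hx ?_
    rw [← sum_support_decompose 𝒜 x, map_sum]
    exact Finset.sum_eq_zero fun i hi ↦ by simpa using Finset.filter_eq_empty_iff.1 hS hi
  obtain ⟨m, hmS, hm⟩ := S.exists_max_image id hS
  refine ⟨m, (Finset.mem_filter.1 hmS).2, fun i hi ↦ ?_⟩
  by_contra hfi
  have hiS : i ∈ S :=
    Finset.mem_filter.2 ⟨DFinsupp.mem_support_iff.2 fun h ↦ hfi (by simp [h]), hfi⟩
  exact (hm i hiS).not_gt hi

section LinearOrderedGrading

variable {ι A B σ : Type*} [AddCommGroup ι] [LinearOrder ι] [IsOrderedAddMonoid ι]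
  [Semiring A] [Semiring B] [SetLike σ A] [AddSubmonoidClass σ A] (𝒜 : ι → σ) [GradedRing 𝒜]

theorem map_decompose_mul_eq_zero_of_gt (f : A →+* B) {x r : A} {m d : ι}
    (hx : ∀ i > m, f (decompose 𝒜 x i) = 0) (hr : r ∈ 𝒜 d) :
    ∀ i > m + d, f (decompose 𝒜 (x * r) i) = 0 := by
  intro i hi
  rw [← sub_add_cancel i d, coe_decompose_mul_add_of_right_mem 𝒜 hr, map_mul,
    hx _ (lt_sub_iff_add_lt.2 hi), zero_mul]

theorem map_decompose_mul_add_of_gt (f : A →+* B) {x y : A} {m n : ι}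
    (hx : ∀ i > m, f (decompose 𝒜 x i) = 0) (hy : ∀ j > n, f (decompose 𝒜 y j) = 0) :
    f (decompose 𝒜 (x * y) (m + n)) = f (decompose 𝒜 x m) * f (decompose 𝒜 y n) := by
  classical
  have hterm (j : ι) : f (decompose 𝒜 (x * decompose 𝒜 y j) (m + n)) =
      f (decompose 𝒜 x (m + n - j)) * f (decompose 𝒜 y j) := by
    rw [← sub_add_cancel (m + n) j, coe_decompose_mul_add_of_right_mem 𝒜 (SetLike.coe_mem _),
      map_mul, add_sub_cancel_right]
  conv_lhs => rw [← sum_support_decompose 𝒜 y, Finset.mul_sum, decompose_sum,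
    DFinsupp.finsetSum_apply, AddSubmonoidClass.coe_finsetSum, map_sum]
  simp only [hterm]
  rw [Finset.sum_eq_single n (fun j _ hjn ↦ ?_) (fun hn ↦ ?_), add_sub_cancel_right]
  · rcases hjn.lt_or_gt with hjn | hjn
    · rw [hx _ (lt_sub_iff_add_lt.2 (add_lt_add_right hjn m)), zero_mul]
    · rw [hy _ hjn, mul_zero]
  · rw [DFinsupp.notMem_support_iff.1 hn, ZeroMemClass.coe_zero, map_zero, mul_zero]

end LinearOrderedGrading

namespace TwoSidedIdeal

theorem mul_mem_of_mem_span_singleton {R : Type*} [Ring R] {I : TwoSidedIdeal R}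
    {a b : R} (hab : ∀ r, a * r * b ∈ I) {x y : R} (hx : x ∈ span {a}) (hy : y ∈ span {b}) :
    x * y ∈ I := by
  have hxb : ∀ r, x * r * b ∈ I := by
    induction hx using span_induction with
    | mem x hx => rwa [Set.mem_singleton_iff.1 hx]
    | zero => simp
    | add x x' _ _ hx hx' => exact fun r ↦ by simpa [add_mul] using I.add_mem (hx r) (hx' r)
    | neg x _ hx => exact fun r ↦ by simpa using I.neg_mem (hx r)
    | left_absorb s x _ hx => exact fun r ↦ by simpa [mul_assoc] using I.mul_mem_left s _ (hx r)
    | right_absorb s x _ hx => exact fun r ↦ by simpa [mul_assoc] using hx (s * r)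
  suffices ∀ r, x * r * y ∈ I by simpa using this 1
  induction hy using span_induction with
  | mem y hy => rwa [Set.mem_singleton_iff.1 hy]
  | zero => simp
  | add y y' _ _ hy hy' => exact fun r ↦ by simpa [mul_add] using I.add_mem (hy r) (hy' r)
  | neg y _ hy => exact fun r ↦ by simpa using I.neg_mem (hy r)
  | left_absorb s y _ hy => exact fun r ↦ by simpa [mul_assoc] using hy (r * s)
  | right_absorb s y _ hy => exact fun r ↦ by simpa [mul_assoc] using I.mul_mem_right _ s (hy r)

section Grading

variable {ι A σ : Type*} [AddCommGroup ι] [DecidableEq ι] [Ring A] [SetLike σ A]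
  [AddSubmonoidClass σ A] (𝒜 : ι → σ) [GradedRing 𝒜]

theorem coe_decompose_mul_left_mem {J : TwoSidedIdeal A} {x : A}
    (hx : ∀ k, (decompose 𝒜 x k : A) ∈ J) (r : A) (k : ι) : (decompose 𝒜 (r * x) k : A) ∈ J := by
  induction r using DirectSum.Decomposition.inductionOn 𝒜 generalizing k with
  | zero => simp
  | @homogeneous i r =>
    rw [← add_sub_cancel i k, coe_decompose_mul_add_of_left_mem 𝒜 r.2]
    exact J.mul_mem_left _ _ (hx _)
  | add r s hr hs => simpa [add_mul] using J.add_mem (hr k) (hs k)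

theorem coe_decompose_mul_right_mem {J : TwoSidedIdeal A} {x : A}
    (hx : ∀ k, (decompose 𝒜 x k : A) ∈ J) (r : A) (k : ι) : (decompose 𝒜 (x * r) k : A) ∈ J := by
  induction r using DirectSum.Decomposition.inductionOn 𝒜 generalizing k with
  | zero => simp
  | @homogeneous i r =>
    rw [← sub_add_cancel k i, coe_decompose_mul_add_of_right_mem 𝒜 r.2]
    exact J.mul_mem_right _ _ (hx _)
  | add r s hr hs => simpa [mul_add] using J.add_mem (hr k) (hs k)

end Grading

section IntGrading

variable {A : Type} [Ring A] {𝒜 : ℤ → AddSubgroup A} [GradedRing 𝒜]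

theorem isGraded_span {s : Set A} (hs : ∀ x ∈ s, SetLike.IsHomogeneousElem 𝒜 x) :
    (span s).IsGraded 𝒜 := by
  intro x hx
  induction hx using span_induction with
  | mem x hx =>
    obtain ⟨i, hi⟩ := hs x hx
    intro k
    by_cases hik : i = k
    · rw [← hik, decompose_of_mem_same 𝒜 hi]; exact subset_span hx
    · rw [decompose_of_mem_ne 𝒜 hi hik]; exact (span s).zero_mem
  | zero => simp
  | add x y _ _ hx hy =>
    intro k
    rw [← GradedRing.proj_apply, map_add]
    exact (span s).add_mem (hx k) (hy k)
  | neg x _ hx =>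
    intro k
    rw [← GradedRing.proj_apply, map_neg]
    exact (span s).neg_mem (hx k)
  | left_absorb r x _ hx => exact coe_decompose_mul_left_mem 𝒜 hx r
  | right_absorb r x _ hx => exact coe_decompose_mul_right_mem 𝒜 hx r

theorem mem_or_mem_of_isGradedPrime {I : TwoSidedIdeal A}
    (hI : ∀ J₁ J₂ : TwoSidedIdeal A, J₁.IsGraded 𝒜 → J₂.IsGraded 𝒜 →
      (∀ a ∈ J₁, ∀ b ∈ J₂, a * b ∈ I) → J₁ ≤ I ∨ J₂ ≤ I)
    {a b : A} (ha : SetLike.IsHomogeneousElem 𝒜 a) (hb : SetLike.IsHomogeneousElem 𝒜 b)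
    (hab : ∀ r, a * r * b ∈ I) : a ∈ I ∨ b ∈ I := by
  have hspan {x : A} (hx : SetLike.IsHomogeneousElem 𝒜 x) : (span {x}).IsGraded 𝒜 :=
    isGraded_span fun y hy ↦ Set.mem_singleton_iff.1 hy ▸ hx
  exact (hI _ _ (hspan ha) (hspan hb) fun x hx y hy ↦ mul_mem_of_mem_span_singleton hab hx hy).imp
    (· (subset_span rfl)) (· (subset_span rfl))

theorem IsGraded.mem_or_mem_of_homogeneous {I : TwoSidedIdeal A} (hI : I.IsGraded 𝒜)
    (hhom : ∀ {a b : A}, SetLike.IsHomogeneousElem 𝒜 a → SetLike.IsHomogeneousElem 𝒜 b →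
      (∀ r, a * r * b ∈ I) → a ∈ I ∨ b ∈ I)
    {a b : A} (hab : ∀ r, a * r * b ∈ I) : a ∈ I ∨ b ∈ I := by
  set f := I.ringCon.mk'
  have hf (x : A) : x ∈ I ↔ f x = 0 := by rw [← mem_ker, ker_ringCon_mk']
  by_contra! ⟨ha, hb⟩
  obtain ⟨m, ham, ha_top⟩ := exists_max_degree_map_decompose_ne_zero 𝒜 ((hf a).not.1 ha)
  obtain ⟨n, hbn, hb_top⟩ := exists_max_degree_map_decompose_ne_zero 𝒜 ((hf b).not.1 hb)
  have htop (r : A) : (decompose 𝒜 a m : A) * r * decompose 𝒜 b n ∈ I := by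
    induction r using DirectSum.Decomposition.inductionOn 𝒜 with
    | zero => simp
    | @homogeneous d r =>
      have har : f (decompose 𝒜 (a * r) (m + d)) = f (decompose 𝒜 a m * r) := by
        rw [coe_decompose_mul_add_of_right_mem 𝒜 r.2]
      rw [hf, map_mul, ← har, ← map_decompose_mul_add_of_gt 𝒜 f
        (map_decompose_mul_eq_zero_of_gt 𝒜 f ha_top r.2) hb_top, ← hf]
      exact hI _ (hab r) _
    | add r s hr hs => simpa [mul_add, add_mul] using I.add_mem hr hs
  rcases hhom ⟨m, SetLike.coe_mem _⟩ ⟨n, SetLike.coe_mem _⟩ htop with h | h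
  · exact ham ((hf _).1 h)
  · exact hbn ((hf _).1 h)

end IntGrading

end TwoSidedIdeal

/-- In a `ℤ`-graded ring, a graded (two-sided) ideal is prime if and only if it is graded
prime, i.e. `J₁J₂ ⊆ I → J₁ ⊆ I ∨ J₂ ⊆ I` for all *graded* ideals `J₁, J₂`. -/
theorem graded_ideal_prime_iff_graded_prime {A : Type} [Ring A]
    (𝒜 : ℤ → AddSubgroup A) [GradedRing 𝒜]
    (I : TwoSidedIdeal A) (hI : I.IsGraded 𝒜) :
    (∀ J₁ J₂ : TwoSidedIdeal A, (∀ a ∈ J₁, ∀ b ∈ J₂, a * b ∈ I) → J₁ ≤ I ∨ J₂ ≤ I) ↔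
    (∀ J₁ J₂ : TwoSidedIdeal A, J₁.IsGraded 𝒜 → J₂.IsGraded 𝒜 →
      (∀ a ∈ J₁, ∀ b ∈ J₂, a * b ∈ I) → J₁ ≤ I ∨ J₂ ≤ I) := by
  refine ⟨fun hprime J₁ J₂ _ _ ↦ hprime J₁ J₂, fun hgr J₁ J₂ hJ ↦ ?_⟩
  by_contra! ⟨h₁, h₂⟩
  obtain ⟨a, haJ, haI⟩ := SetLike.not_le_iff_exists.1 h₁
  obtain ⟨b, hbJ, hbI⟩ := SetLike.not_le_iff_exists.1 h₂
  have hab (r : A) : a * r * b ∈ I := hJ _ (J₁.mul_mem_right _ r haJ) _ hbJ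
  exact (hI.mem_or_mem_of_homogeneous (TwoSidedIdeal.mem_or_mem_of_isGradedPrime hgr) hab).elim
    haI hbI
end

section
/- Let E be a graph, R a unital commutative ring, and (H,S) an admissible pair in E. Then the ideal I(H,S) of the Leavitt path algebra L_R(E) generated by {v : v ∈ H} ∪ {v^H : v ∈ S} equals the R-linear span of {αβ* : α,β paths with r(α)=r(β) ∈ H} ∪ {α v^H β* : α,β paths with r(α)=r(β)=v ∈ S}, and I(H,S) is a self-adjoint graded ideal of L_R(E). -/
structure LPGraph where
  V : Type
  E : Type
  s : E → V
  r : E → V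

namespace LPGraph

/-- `v ≥ w`: there is a directed path (possibly trivial) from `v` to `w`. -/
def Reaches (G : LPGraph) (v w : G.V) : Prop :=
  Relation.ReflTransGen (fun a b => ∃ e : G.E, G.s e = a ∧ G.r e = b) v w

def Hereditary (G : LPGraph) (X : Set G.V) : Prop :=
  ∀ e : G.E, G.s e ∈ X → G.r e ∈ X

def Saturated (G : LPGraph) (X : Set G.V) : Prop :=
  ∀ v : G.V, {e : G.E | G.s e = v}.Finite → {e : G.E | G.s e = v}.Nonempty →
    (∀ e : G.E, G.s e = v → G.r e ∈ X) → v ∈ X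

/-- The saturation of `X`: the smallest saturated subset containing `X`. -/
def saturation (G : LPGraph) (X : Set G.V) : Set G.V :=
  ⋂₀ {S : Set G.V | G.Saturated S ∧ X ⊆ S}

def tree (G : LPGraph) (v : G.V) : Set G.V := {w | G.Reaches v w}

def MT1 (G : LPGraph) (M : Set G.V) : Prop :=
  ∀ v w : G.V, w ∈ M → G.Reaches v w → v ∈ M

def MT2 (G : LPGraph) (M : Set G.V) : Prop :=
  ∀ v ∈ M, {e : G.E | G.s e = v}.Finite → {e : G.E | G.s e = v}.Nonempty →
    ∃ e : G.E, G.s e = v ∧ G.r e ∈ M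

def MT3on (G : LPGraph) (M : Set G.V) : Prop :=
  ∀ v ∈ M, ∀ w ∈ M, ∃ y ∈ M, G.Reaches v y ∧ G.Reaches w y

def MT3 (G : LPGraph) : Prop :=
  ∀ v w : G.V, ∃ y : G.V, G.Reaches v y ∧ G.Reaches w y

def Omega (G : LPGraph) (X : Set G.V) : Set G.V :=
  {w | w ∉ X ∧ ∀ v ∈ X, ¬ G.Reaches w v}

def OmegaV (G : LPGraph) (v : G.V) : Set G.V :=
  {w | w ≠ v ∧ ¬ G.Reaches w v}

end LPGraph

namespace LPGraph

def IsBifurcation (G : LPGraph) (v : G.V) : Prop :=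
  ∃ e f : G.E, e ≠ f ∧ G.s e = v ∧ G.s f = v

def IsPathList (G : LPGraph) (l : List G.E) : Prop :=
  l.Chain' (fun e f => G.r e = G.s f)

def IsClosedPath (G : LPGraph) (v : G.V) (l : List G.E) : Prop :=
  l ≠ [] ∧ G.IsPathList l ∧ (∀ e ∈ l.head?, G.s e = v) ∧ (∀ e ∈ l.getLast?, G.r e = v)

def IsClosedSimplePath (G : LPGraph) (v : G.V) (l : List G.E) : Prop :=
  G.IsClosedPath v l ∧ ∀ e ∈ l.tail, G.s e ≠ v

def ConditionK (G : LPGraph) : Prop :=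
  ∀ v : G.V, (¬ ∃ l : List G.E, G.IsClosedPath v l) ∨
    (∃ l₁ l₂ : List G.E, G.IsClosedSimplePath v l₁ ∧ G.IsClosedSimplePath v l₂ ∧ l₁ ≠ l₂)

def ConditionL (G : LPGraph) : Prop :=
  ∀ (v : G.V) (l : List G.E), G.IsClosedSimplePath v l →
    ∃ e ∈ l, ∃ f : G.E, f ≠ e ∧ G.s f = G.s e

/-- `v` is a line point: no vertex in the tree of `v` is a bifurcation or the base of a
closed path. -/
def LinePoint (G : LPGraph) (v : G.V) : Prop :=
  ∀ w : G.V, G.Reaches v w →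
    ¬ G.IsBifurcation w ∧ ¬ ∃ l : List G.E, G.IsClosedPath w l

/-- `B_H`: vertices outside `H` emitting infinitely many edges, but finitely many
(and at least one) into `E⁰ \ H`. -/
def BH (G : LPGraph) (H : Set G.V) : Set G.V :=
  {v | v ∉ H ∧ {e : G.E | G.s e = v}.Infinite ∧
    {e : G.E | G.s e = v ∧ G.r e ∉ H}.Finite ∧
    {e : G.E | G.s e = v ∧ G.r e ∉ H}.Nonempty}

/-- An admissible pair: `H` hereditary saturated, `S ⊆ B_H`. -/
def Admissible (G : LPGraph) (H S : Set G.V) : Prop :=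
  G.Hereditary H ∧ G.Saturated H ∧ S ⊆ G.BH H

/-- Finite paths in `G`, indexed by source and range. -/
inductive Path (G : LPGraph) : G.V → G.V → Type
  | nil (v : G.V) : Path G v v
  | cons (e : G.E) {w : G.V} (p : Path G (G.r e) w) : Path G (G.s e) w

def Path.length {G : LPGraph} : ∀ {v w : G.V}, Path G v w → ℕ
  | _, _, .nil _ => 0
  | _, _, .cons _ p => p.length + 1

/-- The path contains no bifurcations among the sources of its edges. -/
def Path.NoBif {G : LPGraph} : ∀ {v w : G.V}, Path G v w → Prop
  | _, _, .nil _ => True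
  | _, _, .cons e p => (∀ f : _, LPGraph.s _ f = LPGraph.s _ e → f = e) ∧ p.NoBif

end LPGraph

/-- Generators of the Leavitt path algebra: vertices, real edges and ghost edges. -/
inductive LGen (G : LPGraph) : Type
  | vertex : G.V → LGen G
  | edge : G.E → LGen G
  | ghost : G.E → LGen G

variable (R : Type) [CommRing R] (G : LPGraph)

noncomputable def fv (v : G.V) : FreeAlgebra R (LGen G) := FreeAlgebra.ι R (LGen.vertex v)
noncomputable def fe (e : G.E) : FreeAlgebra R (LGen G) := FreeAlgebra.ι R (LGen.edge e)
noncomputable def fg (e : G.E) : FreeAlgebra R (LGen G) := FreeAlgebra.ι R (LGen.ghost e)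

/-- The defining relations of the Leavitt path algebra. -/
inductive LRel : FreeAlgebra R (LGen G) → FreeAlgebra R (LGen G) → Prop
  | idem (v : G.V) : LRel (fv R G v * fv R G v) (fv R G v)
  | orth (v w : G.V) (h : v ≠ w) : LRel (fv R G v * fv R G w) 0
  | edge_src (e : G.E) : LRel (fv R G (G.s e) * fe R G e) (fe R G e)
  | edge_rng (e : G.E) : LRel (fe R G e * fv R G (G.r e)) (fe R G e)
  | ghost_rng (e : G.E) : LRel (fv R G (G.r e) * fg R G e) (fg R G e)
  | ghost_src (e : G.E) : LRel (fg R G e * fv R G (G.s e)) (fg R G e)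
  | ck1_same (e : G.E) : LRel (fg R G e * fe R G e) (fv R G (G.r e))
  | ck1_diff (e f : G.E) (h : e ≠ f) : LRel (fg R G e * fe R G f) 0
  | ck2 (v : G.V) (h1 : {e : G.E | G.s e = v}.Finite)
      (h2 : {e : G.E | G.s e = v}.Nonempty) :
      LRel (fv R G v) (∑ e ∈ h1.toFinset, fe R G e * fg R G e)

/-- The Leavitt path algebra `L_R(E)`. -/
abbrev LPA := RingQuot (LRel R G)

noncomputable def Xv (v : G.V) : LPA R G := RingQuot.mkAlgHom R (LRel R G) (fv R G v)
noncomputable def Xe (e : G.E) : LPA R G := RingQuot.mkAlgHom R (LRel R G) (fe R G e)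
noncomputable def Xg (e : G.E) : LPA R G := RingQuot.mkAlgHom R (LRel R G) (fg R G e)

open MulOpposite in
/-- The involution on `L_R(E)`, built from the universal property, sending
`v ↦ v`, `e ↦ e*`, `e* ↦ e` and reversing products. -/
noncomputable def preStar : FreeAlgebra R (LGen G) →ₐ[R] (LPA R G)ᵐᵒᵖ :=
  FreeAlgebra.lift R fun x => match x with
    | LGen.vertex v => op (Xv R G v)
    | LGen.edge e => op (Xg R G e)
    | LGen.ghost e => op (Xe R G e)

section starlemmas

lemma Xv_mul_self (v : G.V) : Xv R G v * Xv R G v = Xv R G v := by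
  simpa only [Xv, map_mul] using RingQuot.mkAlgHom_rel R (LRel.idem (R := R) (G := G) v)

lemma Xv_mul_Xv (v w : G.V) (h : v ≠ w) : Xv R G v * Xv R G w = 0 := by
  simpa only [Xv, map_mul, map_zero] using
    RingQuot.mkAlgHom_rel R (LRel.orth (R := R) (G := G) v w h)

lemma Xv_mul_Xe (e : G.E) : Xv R G (G.s e) * Xe R G e = Xe R G e := by
  simpa only [Xv, Xe, map_mul] using RingQuot.mkAlgHom_rel R (LRel.edge_src (R := R) (G := G) e)

lemma Xe_mul_Xv (e : G.E) : Xe R G e * Xv R G (G.r e) = Xe R G e := by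
  simpa only [Xv, Xe, map_mul] using RingQuot.mkAlgHom_rel R (LRel.edge_rng (R := R) (G := G) e)

lemma Xv_mul_Xg (e : G.E) : Xv R G (G.r e) * Xg R G e = Xg R G e := by
  simpa only [Xv, Xg, map_mul] using RingQuot.mkAlgHom_rel R (LRel.ghost_rng (R := R) (G := G) e)

lemma Xg_mul_Xv (e : G.E) : Xg R G e * Xv R G (G.s e) = Xg R G e := by
  simpa only [Xv, Xg, map_mul] using RingQuot.mkAlgHom_rel R (LRel.ghost_src (R := R) (G := G) e)

lemma Xg_mul_Xe_same (e : G.E) : Xg R G e * Xe R G e = Xv R G (G.r e) := by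
  simpa only [Xv, Xe, Xg, map_mul] using
    RingQuot.mkAlgHom_rel R (LRel.ck1_same (R := R) (G := G) e)

lemma Xg_mul_Xe_diff (e f : G.E) (h : e ≠ f) : Xg R G e * Xe R G f = 0 := by
  simpa only [Xe, Xg, map_mul, map_zero] using
    RingQuot.mkAlgHom_rel R (LRel.ck1_diff (R := R) (G := G) e f h)

lemma Xv_ck2 (v : G.V) (h1 : {e : G.E | G.s e = v}.Finite)
    (h2 : {e : G.E | G.s e = v}.Nonempty) :
    Xv R G v = ∑ e ∈ h1.toFinset, Xe R G e * Xg R G e := by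
  simpa only [Xv, Xe, Xg, map_mul, map_sum] using
    RingQuot.mkAlgHom_rel R (LRel.ck2 (R := R) (G := G) v h1 h2)

open MulOpposite in
lemma preStar_rel : ∀ ⦃a b : FreeAlgebra R (LGen G)⦄, LRel R G a b →
    preStar R G a = preStar R G b := by
  intro a b h
  induction h with
  | idem v =>
      simp only [map_mul, preStar, fv, FreeAlgebra.lift_ι_apply, ← op_mul]
      exact congrArg op (Xv_mul_self R G v)
  | orth v w h =>
      simp only [map_mul, map_zero, preStar, fv, FreeAlgebra.lift_ι_apply, ← op_mul]
      rw [Xv_mul_Xv R G w v h.symm]; rfl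
  | edge_src e =>
      simp only [map_mul, preStar, fv, fe, FreeAlgebra.lift_ι_apply, ← op_mul]
      exact congrArg op (Xg_mul_Xv R G e)
  | edge_rng e =>
      simp only [map_mul, preStar, fv, fe, FreeAlgebra.lift_ι_apply, ← op_mul]
      exact congrArg op (Xv_mul_Xg R G e)
  | ghost_rng e =>
      simp only [map_mul, preStar, fv, fg, FreeAlgebra.lift_ι_apply, ← op_mul]
      exact congrArg op (Xe_mul_Xv R G e)
  | ghost_src e =>
      simp only [map_mul, preStar, fv, fg, FreeAlgebra.lift_ι_apply, ← op_mul]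
      exact congrArg op (Xv_mul_Xe R G e)
  | ck1_same e =>
      simp only [map_mul, preStar, fv, fe, fg, FreeAlgebra.lift_ι_apply, ← op_mul]
      exact congrArg op (Xg_mul_Xe_same R G e)
  | ck1_diff e f h =>
      simp only [map_mul, map_zero, preStar, fe, fg, FreeAlgebra.lift_ι_apply, ← op_mul]
      rw [Xg_mul_Xe_diff R G f e h.symm]; rfl
  | ck2 v h1 h2 =>
      simp only [map_sum, map_mul, preStar, fv, fe, fg, FreeAlgebra.lift_ι_apply, ← op_mul,
        ← Finset.op_sum]
      exact congrArg op (Xv_ck2 R G v h1 h2)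

end starlemmas

open MulOpposite in
noncomputable def starHom : LPA R G →ₐ[R] (LPA R G)ᵐᵒᵖ :=
  RingQuot.liftAlgHom R ⟨preStar R G, preStar_rel R G⟩

/-- The canonical involution (`*`-operation) on `L_R(E)`. -/
noncomputable def lpaStar (x : LPA R G) : LPA R G := MulOpposite.unop (starHom R G x)

/-- The element of `L_R(E)` associated to a path (product of real edges;
a trivial path gives the vertex). -/
noncomputable def pathE : ∀ {v w : G.V}, G.Path v w → LPA R G
  | _, _, .nil v => Xv R G v
  | _, _, .cons e p => Xe R G e * pathE p

/-- The ghost element `α*` of `L_R(E)` associated to a path `α`. -/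
noncomputable def pathG : ∀ {v w : G.V}, G.Path v w → LPA R G
  | _, _, .nil v => Xv R G v
  | _, _, .cons e p => pathG p * Xg R G e

/-- The homogeneous lpaComponent of degree `k` of `L_R(E)`:
the `R`-span of elements `αβ*` with `|α| - |β| = k`. -/
noncomputable def lpaComponent (k : ℤ) : Submodule R (LPA R G) :=
  Submodule.span R {x : LPA R G |
    ∃ (v₁ v₂ w : G.V) (α : G.Path v₁ w) (β : G.Path v₂ w),
      (α.length : ℤ) - (β.length : ℤ) = k ∧ x = pathE R G α * pathG R G β}

/-- A two-sided ideal of `L_R(E)` is graded if each of its elements is an `R`-linear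
combination of homogeneous elements belonging to the ideal. -/
def IsGraded (I : TwoSidedIdeal (LPA R G)) : Prop :=
  ∀ x ∈ I, x ∈ Submodule.span R
    (⋃ k : ℤ, (I : Set (LPA R G)) ∩ (lpaComponent R G k : Set (LPA R G)))

/-- A basic ideal: `r • x ∈ I` with `r ≠ 0` implies `x ∈ I`, for `x` a vertex or an
element of the form `v - ∑ᵢ eᵢeᵢ*` with `s(eᵢ) = v`. -/
def IsBasic (I : TwoSidedIdeal (LPA R G)) : Prop :=
  (∀ (r : R) (v : G.V), r ≠ 0 → r • Xv R G v ∈ I → Xv R G v ∈ I) ∧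
  (∀ (r : R) (v : G.V) (F : Finset G.E), r ≠ 0 → (∀ e ∈ F, G.s e = v) →
    r • (Xv R G v - ∑ e ∈ F, Xe R G e * Xg R G e) ∈ I →
    (Xv R G v - ∑ e ∈ F, Xe R G e * Xg R G e) ∈ I)

/-- `v^H = v - ∑_{s(e)=v, r(e)∉H} ee*`. -/
noncomputable def vH (H : Set G.V) (v : G.V) : LPA R G :=
  Xv R G v - ∑ᶠ (e : G.E) (_ : G.s e = v ∧ G.r e ∉ H), Xe R G e * Xg R G e

/-- `I(H,S)`: the two-sided ideal generated by `{v : v ∈ H} ∪ {v^H : v ∈ S}`. -/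
noncomputable def IHS (H S : Set G.V) : TwoSidedIdeal (LPA R G) :=
  TwoSidedIdeal.span ((fun v => Xv R G v) '' H ∪ (fun v => vH R G H v) '' S)

/-- The quotient ring of `L_R(E)` by a two-sided ideal, as an `R`-algebra. -/
abbrev QuotLPA (I : TwoSidedIdeal (LPA R G)) := RingQuot (fun a b : LPA R G => a - b ∈ I)

/-- The quotient graph `E/(H,S)`. -/
def quotGraph (H S : Set G.V) (hH : G.Hereditary H) : LPGraph where
  V := {v : G.V // v ∉ H} ⊕ {v : G.V // v ∈ G.BH H ∧ v ∉ S}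
  E := {e : G.E // G.r e ∉ H} ⊕ {e : G.E // G.r e ∈ G.BH H ∧ G.r e ∉ S}
  s := fun x => match x with
    | Sum.inl e => Sum.inl ⟨G.s e.1, fun h => e.2 (hH e.1 h)⟩
    | Sum.inr e => Sum.inl ⟨G.s e.1, fun h => e.2.1.1 (hH e.1 h)⟩
  r := fun x => match x with
    | Sum.inl e => Sum.inl ⟨G.r e.1, e.2⟩
    | Sum.inr e => Sum.inr ⟨G.r e.1, e.2⟩

/-! The span of the elements `α c β*`, with `c` one of the generators `w` (`w ∈ H`) or `w^H`
(`w ∈ S`) of `I(H,S)` and `r(α) = r(β) = w`, lies in `I(H,S)` and contains the generators, so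
it is enough to see that it is a two-sided ideal. It is stable under the involution, because
`(α c β*)* = β c α*`, so only left multiplication by `v`, `e` and `e*` has to be checked. The one
case that is not bookkeeping with the relations is `f* c β*` with `s(f) = w`: then `f* w = f*`
and `r(f) ∈ H` by hereditarity, while `f* w^H` is `f*` or `0` according as `r(f) ∈ H` or not;
so `f* c β*` is either `0` or `(βf)*`, which is of the required form with `c = r(f)`.
Each `α c β*` is homogeneous of degree `|α| - |β|`, which gives the grading. -/

variable {R G}

namespace LPGraph.Path

def comp : ∀ {u v w : G.V}, G.Path u v → G.Path v w → G.Path u w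
  | _, _, _, .nil _, q => q
  | _, _, _, .cons e p, q => .cons e (p.comp q)

def snoc {u : G.V} (e : G.E) (p : G.Path u (G.s e)) : G.Path u (G.r e) :=
  p.comp (.cons e (.nil _))

lemma length_comp : ∀ {u v w : G.V} (p : G.Path u v) (q : G.Path v w),
    (p.comp q).length = p.length + q.length
  | _, _, _, .nil _, q => (Nat.zero_add _).symm
  | _, _, _, .cons _ p, q => by
    simp only [comp, length, length_comp p q]; omega

lemma length_snoc {u : G.V} {e : G.E} (p : G.Path u (G.s e)) :
    (p.snoc e).length = p.length + 1 :=
  length_comp p _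

end LPGraph.Path

section Paths

@[simp] lemma pathE_nil (v : G.V) : pathE R G (.nil v) = Xv R G v := rfl

@[simp] lemma pathE_cons (e : G.E) {w : G.V} (p : G.Path (G.r e) w) :
    pathE R G (.cons e p) = Xe R G e * pathE R G p := rfl

@[simp] lemma pathG_nil (v : G.V) : pathG R G (.nil v) = Xv R G v := rfl

@[simp] lemma pathG_cons (e : G.E) {w : G.V} (p : G.Path (G.r e) w) :
    pathG R G (.cons e p) = pathG R G p * Xg R G e := rfl

lemma Xv_mul_pathE : ∀ {v w : G.V} (p : G.Path v w), Xv R G v * pathE R G p = pathE R G p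
  | _, _, .nil v => Xv_mul_self R G v
  | _, _, .cons e p => by rw [pathE_cons, ← mul_assoc, Xv_mul_Xe]

lemma pathE_mul_Xv : ∀ {v w : G.V} (p : G.Path v w), pathE R G p * Xv R G w = pathE R G p
  | _, _, .nil v => Xv_mul_self R G v
  | _, _, .cons e p => by rw [pathE_cons, mul_assoc, pathE_mul_Xv]

lemma Xv_mul_pathG : ∀ {v w : G.V} (p : G.Path v w), Xv R G w * pathG R G p = pathG R G p
  | _, _, .nil v => Xv_mul_self R G v
  | _, _, .cons e p => by rw [pathG_cons, ← mul_assoc, Xv_mul_pathG]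

lemma pathG_mul_Xv : ∀ {v w : G.V} (p : G.Path v w), pathG R G p * Xv R G v = pathG R G p
  | _, _, .nil v => Xv_mul_self R G v
  | _, _, .cons e p => by rw [pathG_cons, mul_assoc, Xg_mul_Xv]

lemma Xv_mul_pathE_of_ne {v w u : G.V} (p : G.Path v w) (h : u ≠ v) :
    Xv R G u * pathE R G p = 0 := by
  rw [← Xv_mul_pathE p, ← mul_assoc, Xv_mul_Xv R G u v h, zero_mul]

lemma Xe_mul_pathE_of_ne {v w : G.V} (p : G.Path v w) {f : G.E} (h : G.r f ≠ v) :
    Xe R G f * pathE R G p = 0 := by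
  rw [← Xv_mul_pathE p, ← mul_assoc, ← Xe_mul_Xv R G f, mul_assoc _ (Xv R G (G.r f)),
    Xv_mul_Xv R G _ _ h, mul_zero, zero_mul]

lemma Xg_mul_Xv_of_ne {f : G.E} {v : G.V} (h : G.s f ≠ v) : Xg R G f * Xv R G v = 0 := by
  rw [← Xg_mul_Xv R G f, mul_assoc, Xv_mul_Xv R G _ _ h, mul_zero]

lemma pathE_comp : ∀ {u v w : G.V} (p : G.Path u v) (q : G.Path v w),
    pathE R G (p.comp q) = pathE R G p * pathE R G q
  | _, _, _, .nil _, q => (Xv_mul_pathE q).symm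
  | _, _, _, .cons e p, q => by
    rw [LPGraph.Path.comp, pathE_cons, pathE_cons, pathE_comp p q, mul_assoc]

lemma pathG_comp : ∀ {u v w : G.V} (p : G.Path u v) (q : G.Path v w),
    pathG R G (p.comp q) = pathG R G q * pathG R G p
  | _, _, _, .nil _, q => (pathG_mul_Xv q).symm
  | _, _, _, .cons e p, q => by
    rw [LPGraph.Path.comp, pathG_cons, pathG_cons, pathG_comp p q, mul_assoc]

lemma pathE_snoc {u : G.V} {e : G.E} (p : G.Path u (G.s e)) :
    pathE R G (p.snoc e) = pathE R G p * Xe R G e := by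
  rw [LPGraph.Path.snoc, pathE_comp, pathE_cons, pathE_nil, Xe_mul_Xv]

lemma pathG_snoc {u : G.V} {e : G.E} (p : G.Path u (G.s e)) :
    pathG R G (p.snoc e) = Xg R G e * pathG R G p := by
  rw [LPGraph.Path.snoc, pathG_comp, pathG_cons, pathG_nil, Xv_mul_Xg]

lemma pathE_mul_pathG_mem_lpaComponent {v₁ v₂ w : G.V} (α : G.Path v₁ w) (β : G.Path v₂ w) :
    pathE R G α * pathG R G β ∈ lpaComponent R G (α.length - β.length) :=
  Submodule.subset_span ⟨v₁, v₂, w, α, β, rfl, rfl⟩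

end Paths

section VH

variable {H : Set G.V} {v : G.V}

lemma vH_eq (hfin : {e : G.E | G.s e = v ∧ G.r e ∉ H}.Finite) :
    vH R G H v = Xv R G v - ∑ e ∈ hfin.toFinset, Xe R G e * Xg R G e := by
  rw [vH, ← finsum_mem_eq_finite_toFinset_sum _ hfin]
  rfl

lemma Xv_mul_vH (hfin : {e : G.E | G.s e = v ∧ G.r e ∉ H}.Finite) :
    Xv R G v * vH R G H v = vH R G H v := by
  rw [vH_eq hfin, mul_sub, Xv_mul_self, Finset.mul_sum]
  refine congrArg _ (Finset.sum_congr rfl fun e he => ?_)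
  rw [← mul_assoc, ← (hfin.mem_toFinset.mp he).1, Xv_mul_Xe]

lemma vH_mul_Xv (hfin : {e : G.E | G.s e = v ∧ G.r e ∉ H}.Finite) :
    vH R G H v * Xv R G v = vH R G H v := by
  rw [vH_eq hfin, sub_mul, Xv_mul_self, Finset.sum_mul]
  refine congrArg _ (Finset.sum_congr rfl fun e he => ?_)
  rw [mul_assoc, ← (hfin.mem_toFinset.mp he).1, Xg_mul_Xv]

lemma Xg_mul_vH_of_mem (hfin : {e : G.E | G.s e = v ∧ G.r e ∉ H}.Finite) {f : G.E}
    (hs : G.s f = v) (hr : G.r f ∈ H) : Xg R G f * vH R G H v = Xg R G f := by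
  have hsum : Xg R G f * ∑ e ∈ hfin.toFinset, Xe R G e * Xg R G e = 0 := by
    rw [Finset.mul_sum]
    refine Finset.sum_eq_zero fun e he => ?_
    have hne : f ≠ e := fun h => (hfin.mem_toFinset.mp he).2 (h ▸ hr)
    rw [← mul_assoc, Xg_mul_Xe_diff R G f e hne, zero_mul]
  rw [vH_eq hfin, mul_sub, hsum, sub_zero, ← hs, Xg_mul_Xv]

lemma Xg_mul_vH_of_not_mem (hfin : {e : G.E | G.s e = v ∧ G.r e ∉ H}.Finite) {f : G.E}
    (hs : G.s f = v) (hr : G.r f ∉ H) : Xg R G f * vH R G H v = 0 := by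
  have hsum : Xg R G f * ∑ e ∈ hfin.toFinset, Xe R G e * Xg R G e = Xg R G f := by
    rw [Finset.mul_sum, Finset.sum_eq_single_of_mem f (hfin.mem_toFinset.mpr ⟨hs, hr⟩)]
    · rw [← mul_assoc, Xg_mul_Xe_same, Xv_mul_Xg]
    · intro e _ hne
      rw [← mul_assoc, Xg_mul_Xe_diff R G f e hne.symm, zero_mul]
  rw [vH_eq hfin, mul_sub, hsum, ← hs, Xg_mul_Xv, sub_self]

end VH

@[elab_as_elim]
theorem LPA.induction_on {P : LPA R G → Prop} (a : LPA R G)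
    (algebraMap : ∀ r : R, P (algebraMap R (LPA R G) r))
    (vertex : ∀ v, P (Xv R G v)) (edge : ∀ e, P (Xe R G e)) (ghost : ∀ e, P (Xg R G e))
    (add : ∀ a b, P a → P b → P (a + b)) (mul : ∀ a b, P a → P b → P (a * b)) : P a := by
  obtain ⟨x, rfl⟩ := RingQuot.mkAlgHom_surjective R (LRel R G) a
  induction x using FreeAlgebra.induction with
  | grade0 r => simpa only [AlgHom.commutes] using algebraMap r
  | grade1 g =>
    cases g with
    | vertex v => exact vertex v
    | edge e => exact edge e
    | ghost e => exact ghost e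
  | mul x y hx hy => simpa only [map_mul] using mul _ _ hx hy
  | add x y hx hy => simpa only [map_add] using add _ _ hx hy

section Star

variable (R G) in
noncomputable def lpaStarₗ : LPA R G →ₗ[R] LPA R G :=
  (MulOpposite.opLinearEquiv R).symm.toLinearMap ∘ₗ (starHom R G).toLinearMap

lemma lpaStarₗ_apply (x : LPA R G) : lpaStarₗ R G x = lpaStar R G x := rfl

lemma lpaStar_mul (x y : LPA R G) :
    lpaStar R G (x * y) = lpaStar R G y * lpaStar R G x := by
  rw [lpaStar, map_mul, MulOpposite.unop_mul]; rfl

lemma lpaStar_add (x y : LPA R G) :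
    lpaStar R G (x + y) = lpaStar R G x + lpaStar R G y := by
  simp only [← lpaStarₗ_apply, map_add]

lemma lpaStar_sub (x y : LPA R G) :
    lpaStar R G (x - y) = lpaStar R G x - lpaStar R G y := by
  simp only [← lpaStarₗ_apply, map_sub]

lemma lpaStar_algebraMap (r : R) :
    lpaStar R G (algebraMap R (LPA R G) r) = algebraMap R (LPA R G) r := by
  rw [lpaStar, AlgHom.commutes]; rfl

lemma lpaStar_Xv (v : G.V) : lpaStar R G (Xv R G v) = Xv R G v := by
  rw [lpaStar, starHom, Xv, RingQuot.liftAlgHom_mkAlgHom_apply]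
  exact congrArg MulOpposite.unop (FreeAlgebra.lift_ι_apply _ _)

lemma lpaStar_Xe (e : G.E) : lpaStar R G (Xe R G e) = Xg R G e := by
  rw [lpaStar, starHom, Xe, RingQuot.liftAlgHom_mkAlgHom_apply]
  exact congrArg MulOpposite.unop (FreeAlgebra.lift_ι_apply _ _)

lemma lpaStar_Xg (e : G.E) : lpaStar R G (Xg R G e) = Xe R G e := by
  rw [lpaStar, starHom, Xg, RingQuot.liftAlgHom_mkAlgHom_apply]
  exact congrArg MulOpposite.unop (FreeAlgebra.lift_ι_apply _ _)

lemma lpaStar_lpaStar (x : LPA R G) : lpaStar R G (lpaStar R G x) = x := by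
  induction x using LPA.induction_on with
  | algebraMap r => rw [lpaStar_algebraMap, lpaStar_algebraMap]
  | vertex v => rw [lpaStar_Xv, lpaStar_Xv]
  | edge e => rw [lpaStar_Xe, lpaStar_Xg]
  | ghost e => rw [lpaStar_Xg, lpaStar_Xe]
  | add a b ha hb => rw [lpaStar_add, lpaStar_add, ha, hb]
  | mul a b ha hb => rw [lpaStar_mul, lpaStar_mul, ha, hb]

lemma lpaStar_pathE : ∀ {v w : G.V} (p : G.Path v w), lpaStar R G (pathE R G p) = pathG R G p
  | _, _, .nil v => lpaStar_Xv v
  | _, _, .cons e p => by rw [pathE, lpaStar_mul, lpaStar_Xe, lpaStar_pathE p, pathG]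

lemma lpaStar_pathG : ∀ {v w : G.V} (p : G.Path v w), lpaStar R G (pathG R G p) = pathE R G p
  | _, _, .nil v => lpaStar_Xv v
  | _, _, .cons e p => by rw [pathG, lpaStar_mul, lpaStar_Xg, lpaStar_pathG p, pathE]

lemma lpaStar_vH {H : Set G.V} {v : G.V} (hfin : {e : G.E | G.s e = v ∧ G.r e ∉ H}.Finite) :
    lpaStar R G (vH R G H v) = vH R G H v := by
  rw [vH_eq hfin, lpaStar_sub, lpaStar_Xv, ← lpaStarₗ_apply, map_sum]
  refine congrArg _ (Finset.sum_congr rfl fun e _ => ?_)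
  rw [lpaStarₗ_apply, lpaStar_mul, lpaStar_Xe, lpaStar_Xg]

end Star

section Generators

variable {H S : Set G.V}

variable (R G H S) in
def IsIHSGenAt (w : G.V) (c : LPA R G) : Prop :=
  (w ∈ H ∧ c = Xv R G w) ∨ (w ∈ S ∧ c = vH R G H w)

namespace IsIHSGenAt

variable {w : G.V} {c : LPA R G}

lemma mem_IHS (hc : IsIHSGenAt R G H S w c) : c ∈ IHS R G H S := by
  rcases hc with ⟨hw, rfl⟩ | ⟨hw, rfl⟩
  · exact TwoSidedIdeal.subset_span (Or.inl ⟨w, hw, rfl⟩)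
  · exact TwoSidedIdeal.subset_span (Or.inr ⟨w, hw, rfl⟩)

lemma Xv_mul_mul_Xv (hS : S ⊆ G.BH H) (hc : IsIHSGenAt R G H S w c) :
    Xv R G w * c * Xv R G w = c := by
  rcases hc with ⟨-, rfl⟩ | ⟨hw, rfl⟩
  · rw [Xv_mul_self, Xv_mul_self]
  · rw [Xv_mul_vH (hS hw).2.2.1, vH_mul_Xv (hS hw).2.2.1]

lemma lpaStar_eq (hS : S ⊆ G.BH H) (hc : IsIHSGenAt R G H S w c) : lpaStar R G c = c := by
  rcases hc with ⟨-, rfl⟩ | ⟨hw, rfl⟩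
  · exact lpaStar_Xv w
  · exact lpaStar_vH (hS hw).2.2.1

lemma Xg_mul (hH : G.Hereditary H) (hS : S ⊆ G.BH H) (hc : IsIHSGenAt R G H S w c)
    {f : G.E} (hf : G.s f = w) :
    (G.r f ∈ H ∧ Xg R G f * c = Xg R G f) ∨ Xg R G f * c = 0 := by
  rcases hc with ⟨hw, rfl⟩ | ⟨hw, rfl⟩
  · exact Or.inl ⟨hH f (hf ▸ hw), by rw [← hf, Xg_mul_Xv]⟩
  · by_cases hr : G.r f ∈ H
    · exact Or.inl ⟨hr, Xg_mul_vH_of_mem (hS hw).2.2.1 hf hr⟩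
    · exact Or.inr (Xg_mul_vH_of_not_mem (hS hw).2.2.1 hf hr)

lemma pathE_mul_mul_pathG_mem_lpaComponent (hS : S ⊆ G.BH H) (hc : IsIHSGenAt R G H S w c)
    {v₁ v₂ : G.V} (α : G.Path v₁ w) (β : G.Path v₂ w) :
    pathE R G α * c * pathG R G β ∈ lpaComponent R G (α.length - β.length) := by
  rcases hc with ⟨-, rfl⟩ | ⟨hw, rfl⟩
  · rw [pathE_mul_Xv]
    exact pathE_mul_pathG_mem_lpaComponent α β
  · have hfin := (hS hw).2.2.1
    rw [vH_eq hfin, mul_sub, sub_mul, pathE_mul_Xv, Finset.mul_sum, Finset.sum_mul]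
    refine Submodule.sub_mem _ (pathE_mul_pathG_mem_lpaComponent α β)
      (Submodule.sum_mem _ fun e he => ?_)
    obtain rfl : G.s e = w := (hfin.mem_toFinset.mp he).1
    have h := pathE_mul_pathG_mem_lpaComponent (R := R) (α.snoc e) (β.snoc e)
    rwa [pathE_snoc, pathG_snoc, LPGraph.Path.length_snoc, LPGraph.Path.length_snoc,
      ← mul_assoc, mul_assoc (pathE R G α), Nat.cast_succ, Nat.cast_succ,
      add_sub_add_right_eq_sub] at h

end IsIHSGenAt

variable (R G H S) in
def ihsSpanningSet : Set (LPA R G) :=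
  {x | ∃ (v₁ v₂ w : G.V) (c : LPA R G), IsIHSGenAt R G H S w c ∧
    ∃ (α : G.Path v₁ w) (β : G.Path v₂ w), x = pathE R G α * c * pathG R G β}

end Generators

section Span

variable {H S : Set G.V}

local notation "𝒮" => Submodule.span R (ihsSpanningSet R G H S)

lemma IsIHSGenAt.pathE_mul_mul_pathG_mem_span {w v₁ v₂ : G.V} {c : LPA R G}
    (hc : IsIHSGenAt R G H S w c) (α : G.Path v₁ w) (β : G.Path v₂ w) :
    pathE R G α * c * pathG R G β ∈ 𝒮 :=
  Submodule.subset_span ⟨v₁, v₂, w, c, hc, α, β, rfl⟩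

lemma Xv_mul_mem_span (u : G.V) {x : LPA R G} (hx : x ∈ ihsSpanningSet R G H S) :
    Xv R G u * x ∈ 𝒮 := by
  obtain ⟨v₁, v₂, w, c, hc, α, β, rfl⟩ := hx
  simp only [← mul_assoc]
  by_cases h : u = v₁
  · subst h
    rw [Xv_mul_pathE]
    exact hc.pathE_mul_mul_pathG_mem_span α β
  · rw [Xv_mul_pathE_of_ne α h, zero_mul, zero_mul]
    exact Submodule.zero_mem _

lemma Xe_mul_mem_span (f : G.E) {x : LPA R G} (hx : x ∈ ihsSpanningSet R G H S) :
    Xe R G f * x ∈ 𝒮 := by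
  obtain ⟨v₁, v₂, w, c, hc, α, β, rfl⟩ := hx
  simp only [← mul_assoc]
  by_cases h : G.r f = v₁
  · subst h
    exact hc.pathE_mul_mul_pathG_mem_span (.cons f α) β
  · rw [Xe_mul_pathE_of_ne α h, zero_mul, zero_mul]
    exact Submodule.zero_mem _

lemma Xg_mul_mem_span (hH : G.Hereditary H) (hS : S ⊆ G.BH H) (f : G.E) {x : LPA R G}
    (hx : x ∈ ihsSpanningSet R G H S) : Xg R G f * x ∈ 𝒮 := by
  obtain ⟨v₁, v₂, w, c, hc, α, β, rfl⟩ := hx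
  simp only [← mul_assoc]
  cases α with
  | nil =>
    rw [pathE_nil]
    by_cases hf : G.s f = v₁
    · subst hf
      rw [Xg_mul_Xv]
      rcases hc.Xg_mul hH hS rfl with ⟨hr, hfc⟩ | hfc
      · have hgen : IsIHSGenAt R G H S (G.r f) (Xv R G (G.r f)) := Or.inl ⟨hr, rfl⟩
        have h := hgen.pathE_mul_mul_pathG_mem_span (.nil _) (β.snoc f)
        rwa [pathE_nil, Xv_mul_self, Xv_mul_pathG, pathG_snoc, ← hfc] at h
      · rw [hfc, zero_mul]
        exact Submodule.zero_mem _
    · rw [Xg_mul_Xv_of_ne hf, zero_mul, zero_mul]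
      exact Submodule.zero_mem _
  | cons e α =>
    rw [pathE_cons, ← mul_assoc]
    by_cases hfe : f = e
    · subst hfe
      rw [Xg_mul_Xe_same, Xv_mul_pathE]
      exact hc.pathE_mul_mul_pathG_mem_span α β
    · rw [Xg_mul_Xe_diff R G f e hfe, zero_mul, zero_mul, zero_mul]
      exact Submodule.zero_mem _

lemma mul_mem_span_ihsSpanningSet (hH : G.Hereditary H) (hS : S ⊆ G.BH H) (a : LPA R G)
    {x : LPA R G} (hx : x ∈ 𝒮) : a * x ∈ 𝒮 := by
  have of_generator : ∀ b : LPA R G, (∀ y ∈ ihsSpanningSet R G H S, b * y ∈ 𝒮) →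
      ∀ y ∈ 𝒮, b * y ∈ 𝒮 := fun b hb y hy =>
    (Submodule.span_le (p := (𝒮).comap (LinearMap.mulLeft R b))).mpr hb hy
  induction a using LPA.induction_on generalizing x with
  | algebraMap r => rw [← Algebra.smul_def]; exact Submodule.smul_mem _ r hx
  | vertex v => exact of_generator _ (fun y => Xv_mul_mem_span v) x hx
  | edge e => exact of_generator _ (fun y => Xe_mul_mem_span e) x hx
  | ghost e => exact of_generator _ (fun y => Xg_mul_mem_span hH hS e) x hx
  | add a b ha hb => rw [add_mul]; exact Submodule.add_mem _ (ha hx) (hb hx)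
  | mul a b ha hb => rw [mul_assoc]; exact ha (hb hx)

lemma lpaStar_mem_span_ihsSpanningSet (hS : S ⊆ G.BH H) {x : LPA R G} (hx : x ∈ 𝒮) :
    lpaStar R G x ∈ 𝒮 := by
  refine (Submodule.map_span_le (lpaStarₗ R G) _ _).mpr ?_ ⟨x, hx, rfl⟩
  rintro _ ⟨v₁, v₂, w, c, hc, α, β, rfl⟩
  rw [lpaStarₗ_apply, lpaStar_mul, lpaStar_mul, lpaStar_pathE, lpaStar_pathG,
    hc.lpaStar_eq hS, ← mul_assoc]
  exact hc.pathE_mul_mul_pathG_mem_span β α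

lemma mem_span_ihsSpanningSet_mul (hH : G.Hereditary H) (hS : S ⊆ G.BH H) {x : LPA R G}
    (hx : x ∈ 𝒮) (a : LPA R G) : x * a ∈ 𝒮 := by
  have h := lpaStar_mem_span_ihsSpanningSet hS <|
    mul_mem_span_ihsSpanningSet hH hS (lpaStar R G a) (lpaStar_mem_span_ihsSpanningSet hS hx)
  rwa [lpaStar_mul, lpaStar_lpaStar, lpaStar_lpaStar] at h

end Span

section IHS

variable {H S : Set G.V}

lemma IsIHSGenAt.pathE_mul_mul_pathG_mem_IHS {w v₁ v₂ : G.V} {c : LPA R G}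
    (hc : IsIHSGenAt R G H S w c) (α : G.Path v₁ w) (β : G.Path v₂ w) :
    pathE R G α * c * pathG R G β ∈ IHS R G H S :=
  (IHS R G H S).mul_mem_right _ _ ((IHS R G H S).mul_mem_left _ _ hc.mem_IHS)

lemma coe_IHS_eq_span (hH : G.Hereditary H) (hS : S ⊆ G.BH H) :
    (IHS R G H S : Set (LPA R G)) = Submodule.span R (ihsSpanningSet R G H S) := by
  apply Set.Subset.antisymm
  · let J : TwoSidedIdeal (LPA R G) := .mk' (Submodule.span R (ihsSpanningSet R G H S))
      (Submodule.zero_mem _) (Submodule.add_mem _) (Submodule.neg_mem _)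
      (mul_mem_span_ihsSpanningSet hH hS _) (mem_span_ihsSpanningSet_mul hH hS · _)
    suffices IHS R G H S ≤ J from fun x hx => (TwoSidedIdeal.mem_mk' ..).mp (this hx)
    refine TwoSidedIdeal.span_le.mpr ?_
    have mem_J {w : G.V} {c : LPA R G} (hc : IsIHSGenAt R G H S w c) : c ∈ J := by
      rw [TwoSidedIdeal.mem_mk', ← hc.Xv_mul_mul_Xv hS]
      exact Submodule.subset_span ⟨w, w, w, c, hc, .nil w, .nil w, rfl⟩
    rintro _ (⟨w, hw, rfl⟩ | ⟨w, hw, rfl⟩)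
    · exact mem_J (Or.inl ⟨hw, rfl⟩)
    · exact mem_J (Or.inr ⟨hw, rfl⟩)
  · intro x hx
    induction hx using Submodule.span_induction with
    | mem x h =>
      obtain ⟨v₁, v₂, w, c, hc, α, β, rfl⟩ := h
      exact hc.pathE_mul_mul_pathG_mem_IHS α β
    | zero => exact (IHS R G H S).zero_mem
    | add x y _ _ hx hy => exact (IHS R G H S).add_mem hx hy
    | smul r x _ hx => rw [Algebra.smul_def]; exact (IHS R G H S).mul_mem_left _ _ hx

lemma isGraded_IHS (hH : G.Hereditary H) (hS : S ⊆ G.BH H) : IsGraded R G (IHS R G H S) := by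
  intro x hx
  rw [← SetLike.mem_coe, coe_IHS_eq_span hH hS, SetLike.mem_coe] at hx
  refine Submodule.span_mono ?_ hx
  rintro _ ⟨v₁, v₂, w, c, hc, α, β, rfl⟩
  exact Set.mem_iUnion.mpr ⟨_, hc.pathE_mul_mul_pathG_mem_IHS α β,
    hc.pathE_mul_mul_pathG_mem_lpaComponent hS α β⟩

lemma lpaStar_mem_IHS (hH : G.Hereditary H) (hS : S ⊆ G.BH H) {x : LPA R G}
    (hx : x ∈ IHS R G H S) : lpaStar R G x ∈ IHS R G H S := by
  rw [← SetLike.mem_coe, coe_IHS_eq_span hH hS] at hx ⊢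
  exact lpaStar_mem_span_ihsSpanningSet hS hx

lemma ihsSpanningSet_eq :
    ihsSpanningSet R G H S =
      {x : LPA R G | ∃ (v₁ v₂ w : G.V), w ∈ H ∧
          ∃ (α : G.Path v₁ w) (β : G.Path v₂ w), x = pathE R G α * pathG R G β} ∪
       {x : LPA R G | ∃ (v₁ v₂ w : G.V), w ∈ S ∧
          ∃ (α : G.Path v₁ w) (β : G.Path v₂ w),
            x = pathE R G α * vH R G H w * pathG R G β} := by
  ext x
  constructor
  · rintro ⟨v₁, v₂, w, c, ⟨hw, rfl⟩ | ⟨hw, rfl⟩, α, β, rfl⟩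
    · exact Or.inl ⟨v₁, v₂, w, hw, α, β, by rw [pathE_mul_Xv]⟩
    · exact Or.inr ⟨v₁, v₂, w, hw, α, β, rfl⟩
  · rintro (⟨v₁, v₂, w, hw, α, β, rfl⟩ | ⟨v₁, v₂, w, hw, α, β, rfl⟩)
    · exact ⟨v₁, v₂, w, _, Or.inl ⟨hw, rfl⟩, α, β, by rw [pathE_mul_Xv]⟩
    · exact ⟨v₁, v₂, w, _, Or.inr ⟨hw, rfl⟩, α, β, rfl⟩

end IHS

/-- `I(H,S)` equals the `R`-span of `{αβ* : r(α)=r(β) ∈ H} ∪ {α v^H β* : r(α)=r(β)=v ∈ S}`,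
and it is a self-adjoint graded ideal of `L_R(E)`. -/
theorem IHS_span_graded_selfAdjoint (G : LPGraph) (R : Type) [CommRing R]
    (H S : Set G.V) (hAdm : G.Admissible H S) :
    (IHS R G H S : Set (LPA R G)) =
      ↑(Submodule.span R
        ({x : LPA R G | ∃ (v₁ v₂ w : G.V), w ∈ H ∧
            ∃ (α : G.Path v₁ w) (β : G.Path v₂ w), x = pathE R G α * pathG R G β} ∪
         {x : LPA R G | ∃ (v₁ v₂ w : G.V), w ∈ S ∧
            ∃ (α : G.Path v₁ w) (β : G.Path v₂ w),
              x = pathE R G α * vH R G H w * pathG R G β})) ∧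
    IsGraded R G (IHS R G H S) ∧
    (∀ x ∈ IHS R G H S, lpaStar R G x ∈ IHS R G H S) := by
  obtain ⟨hH, -, hS⟩ := hAdm
  exact ⟨ihsSpanningSet_eq (R := R) ▸ coe_IHS_eq_span hH hS, isGraded_IHS hH hS,
    fun _ => lpaStar_mem_IHS hH hS⟩
end

section
/- Let E be a graph, R a unital commutative ring, and (H₁,S₁), (H₂,S₂) admissible pairs in E. Then I(H₁,S₁) ∩ I(H₂,S₂) = I(H₁∩H₂, (H₁∪S₁)∩(H₂∪S₂)∩B_{H₁∩H₂}) as ideals of L_R(E). -/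
variable (R : Type) [CommRing R] (G : LPGraph)

theorem Ideal.exists_mul_eq_of_commute {A : Type*} [Ring A] (I : Ideal A) (s : Finset A)
    (hsI : ∀ e ∈ s, e ∈ I) (hidem : ∀ e ∈ s, IsIdempotentElem e)
    (hcomm : ∀ e ∈ s, ∀ f ∈ s, Commute e f) : ∃ u ∈ I, ∀ e ∈ s, u * e = e := by
  classical
  induction s using Finset.induction_on with
  | empty => exact ⟨0, I.zero_mem, by simp⟩
  | insert e s _ ih =>
    simp only [Finset.mem_insert, forall_eq_or_imp] at hsI hidem hcomm
    obtain ⟨u, hu, hus⟩ := ih hsI.2 hidem.2 fun f hf g hg => (hcomm.2 f hf).2 g hg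
    -- `1 - (u + e - u * e) = (1 - u) * (1 - e)`
    refine ⟨u + e - u * e, I.sub_mem (I.add_mem hu hsI.1) (I.mul_mem_left u hsI.1), ?_⟩
    simp only [Finset.mem_insert, forall_eq_or_imp]
    refine ⟨?_, fun f hf => ?_⟩
    · rw [sub_mul, add_mul, mul_assoc, hidem.1.eq, add_sub_cancel_left]
    · rw [sub_mul, add_mul, hus f hf, mul_assoc, ← (hcomm.2 f hf).1.eq, ← mul_assoc, hus f hf,
        add_sub_cancel_right]

theorem Ideal.exists_mul_eq_of_mem_span {R A : Type*} [CommRing R] [Ring A] [Algebra R A]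
    (I : Ideal A) {C M : Set A} (hCI : C ⊆ I) (hidem : ∀ e ∈ C, IsIdempotentElem e)
    (hcomm : ∀ e ∈ C, ∀ f ∈ C, Commute e f) (hM : ∀ m ∈ M, ∃ e ∈ C, e * m = m) {x : A}
    (hx : x ∈ Submodule.span R M) : ∃ u ∈ I, u * x = x := by
  classical
  suffices h : ∃ s : Finset A, ↑s ⊆ C ∧ ∀ u, (∀ e ∈ s, u * e = e) → u * x = x by
    obtain ⟨s, hsC, hs⟩ := h
    obtain ⟨u, hu, hue⟩ := I.exists_mul_eq_of_commute s (fun e he => hCI (hsC he))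
      (fun e he => hidem e (hsC he)) (fun e he f hf => hcomm e (hsC he) f (hsC hf))
    exact ⟨u, hu, hs u hue⟩
  induction hx using Submodule.span_induction with
  | mem m hm =>
    obtain ⟨e, he, hem⟩ := hM m hm
    refine ⟨{e}, by simpa using he, fun u hu => ?_⟩
    rw [← hem, ← mul_assoc, hu e (Finset.mem_singleton_self e)]
  | zero => exact ⟨∅, by simp, fun u _ => mul_zero u⟩
  | add x y _ _ hx hy =>
    obtain ⟨s, hsC, hs⟩ := hx
    obtain ⟨t, htC, ht⟩ := hy
    refine ⟨s ∪ t, by simpa using ⟨hsC, htC⟩, fun u hu => ?_⟩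
    rw [mul_add, hs u fun e he => hu e (Finset.mem_union_left t he),
      ht u fun e he => hu e (Finset.mem_union_right s he)]
  | smul r x _ hx =>
    obtain ⟨s, hsC, hs⟩ := hx
    exact ⟨s, hsC, fun u hu => by rw [mul_smul_comm, hs u hu]⟩

namespace LPGraph

def exitEdges (H : Set G.V) (v : G.V) : Set G.E := {e | G.s e = v ∧ G.r e ∉ H}

variable {G} {H A B S H₁ S₁ H₂ S₂ : Set G.V} {v : G.V}

lemma Hereditary.inter (hA : G.Hereditary A) (hB : G.Hereditary B) : G.Hereditary (A ∩ B) :=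
  fun e he => ⟨hA e he.1, hB e he.2⟩

lemma Path.mem_of_hereditary (hH : G.Hereditary H) {u w : G.V} (α : G.Path u w) (hu : u ∈ H) :
    w ∈ H := by
  induction α with
  | nil => exact hu
  | cons e p ih => exact ih (hH e hu)

lemma exitEdges_eq_empty (hH : G.Hereditary H) (hv : v ∈ H) : G.exitEdges H v = ∅ :=
  Set.eq_empty_iff_forall_notMem.2 fun e ⟨hs, hr⟩ => hr (hH e (hs ▸ hv))

lemma exitEdges_inter : G.exitEdges (A ∩ B) v = G.exitEdges A v ∪ G.exitEdges B v := by
  ext e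
  simp only [exitEdges, Set.mem_ofPred_eq, Set.mem_union, Set.mem_inter_iff]
  tauto

lemma finite_exitEdges (hH : G.Hereditary H) (hS : S ⊆ G.BH H) (hv : v ∈ H ∪ S) :
    (G.exitEdges H v).Finite := by
  rcases hv with hv | hv
  · rw [exitEdges_eq_empty hH hv]; exact Set.finite_empty
  · exact (hS hv).2.2.1

lemma mem_inter_union_BH_inter (hH₁ : G.Hereditary H₁) (hS₁ : S₁ ⊆ G.BH H₁)
    (hH₂ : G.Hereditary H₂) (hS₂ : S₂ ⊆ G.BH H₂) (hv : v ∈ (H₁ ∪ S₁) ∩ (H₂ ∪ S₂)) :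
    v ∈ H₁ ∩ H₂ ∪ (H₁ ∪ S₁) ∩ (H₂ ∪ S₂) ∩ G.BH (H₁ ∩ H₂) := by
  by_cases hv₁₂ : v ∈ H₁ ∩ H₂
  · exact Or.inl hv₁₂
  have hfin : (G.exitEdges (H₁ ∩ H₂) v).Finite := exitEdges_inter ▸
    (finite_exitEdges hH₁ hS₁ hv.1).union (finite_exitEdges hH₂ hS₂ hv.2)
  have hexit : ∀ {H}, G.exitEdges H v ⊆ G.exitEdges (H₁ ∩ H₂) v → v ∈ G.BH H →
      v ∈ G.BH (H₁ ∩ H₂) := fun hsub hB => ⟨hv₁₂, hB.2.1, hfin, hB.2.2.2.mono hsub⟩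
  refine Or.inr ⟨hv, ?_⟩
  rw [exitEdges_inter] at hexit
  by_cases hv₁ : v ∈ H₁
  · exact hexit Set.subset_union_right (hS₂ (hv.2.resolve_left fun hv₂ => hv₁₂ ⟨hv₁, hv₂⟩))
  · exact hexit Set.subset_union_left (hS₁ (hv.1.resolve_left hv₁))

end LPGraph

namespace LeavittPathAlgebra

open LPGraph

variable {R G}

theorem induction {motive : LPA R G → Prop} (scalar : ∀ r : R, motive (algebraMap R _ r))
    (vertex : ∀ v, motive (Xv R G v)) (edge : ∀ e, motive (Xe R G e))
    (ghost : ∀ e, motive (Xg R G e)) (add : ∀ a b, motive a → motive b → motive (a + b))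
    (mul : ∀ a b, motive a → motive b → motive (a * b)) (x : LPA R G) : motive x := by
  obtain ⟨y, rfl⟩ := RingQuot.mkAlgHom_surjective R (LRel R G) x
  induction y using FreeAlgebra.induction with
  | grade0 r => rw [AlgHom.commutes]; exact scalar r
  | grade1 i =>
    cases i with
    | vertex v => exact vertex v
    | edge e => exact edge e
    | ghost e => exact ghost e
  | mul a b ha hb => rw [map_mul]; exact mul _ _ ha hb
  | add a b ha hb => rw [map_add]; exact add _ _ ha hb

lemma lpaStar_mul (a b : LPA R G) : lpaStar R G (a * b) = lpaStar R G b * lpaStar R G a := by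
  simp [lpaStar]

lemma lpaStar_add (a b : LPA R G) : lpaStar R G (a + b) = lpaStar R G a + lpaStar R G b := by
  simp [lpaStar]

lemma lpaStar_Xv (v : G.V) : lpaStar R G (Xv R G v) = Xv R G v := by
  simp [lpaStar, starHom, Xv, preStar, fv]

lemma lpaStar_Xe (e : G.E) : lpaStar R G (Xe R G e) = Xg R G e := by
  simp [lpaStar, starHom, Xe, preStar, fe]

lemma lpaStar_Xg (e : G.E) : lpaStar R G (Xg R G e) = Xe R G e := by
  simp [lpaStar, starHom, Xg, preStar, fg]

lemma lpaStar_lpaStar (x : LPA R G) : lpaStar R G (lpaStar R G x) = x := by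
  induction x using induction with
  | scalar r => simp [lpaStar]
  | vertex v => rw [lpaStar_Xv, lpaStar_Xv]
  | edge e => rw [lpaStar_Xe, lpaStar_Xg]
  | ghost e => rw [lpaStar_Xg, lpaStar_Xe]
  | add a b ha hb => rw [lpaStar_add, lpaStar_add, ha, hb]
  | mul a b ha hb => rw [lpaStar_mul, lpaStar_mul, ha, hb]

noncomputable instance : StarRing (LPA R G) where
  star := lpaStar R G
  star_involutive := lpaStar_lpaStar
  star_mul := lpaStar_mul
  star_add := lpaStar_add

@[simp] lemma star_Xv (v : G.V) : star (Xv R G v) = Xv R G v := lpaStar_Xv v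
@[simp] lemma star_Xe (e : G.E) : star (Xe R G e) = Xg R G e := lpaStar_Xe e
@[simp] lemma star_Xg (e : G.E) : star (Xg R G e) = Xe R G e := lpaStar_Xg e

lemma Xv_mul_Xe_of_ne {w : G.V} {f : G.E} (h : w ≠ G.s f) : Xv R G w * Xe R G f = 0 := by
  rw [← Xv_mul_Xe, ← mul_assoc, Xv_mul_Xv R G _ _ h, zero_mul]

open scoped Classical in
lemma Xe_mul_Xg_mul_Xe (e f : G.E) :
    Xe R G e * Xg R G e * Xe R G f = if e = f then Xe R G f else 0 := by
  split_ifs with h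
  · rw [h, mul_assoc, Xg_mul_Xe_same, Xe_mul_Xv]
  · rw [mul_assoc, Xg_mul_Xe_diff R G e f h, mul_zero]

variable {H A B S : Set G.V} {v : G.V}

lemma vH_eq_sum (hfin : (G.exitEdges H v).Finite) :
    vH R G H v = Xv R G v - ∑ e ∈ hfin.toFinset, Xe R G e * Xg R G e :=
  congrArg _ (finsum_mem_eq_finite_toFinset_sum _ hfin)

lemma vH_congr (h : G.exitEdges A v = G.exitEdges B v) : vH R G A v = vH R G B v := by
  have h' : ∀ e, (G.s e = v ∧ G.r e ∉ A) ↔ (G.s e = v ∧ G.r e ∉ B) := fun e => Set.ext_iff.1 h e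
  simp only [vH, h']

lemma vH_of_mem (hH : G.Hereditary H) (hv : v ∈ H) : vH R G H v = Xv R G v := by
  rw [vH_eq_sum (by rw [exitEdges_eq_empty hH hv]; exact Set.finite_empty)]
  simp [exitEdges_eq_empty hH hv]

lemma star_vH (hfin : (G.exitEdges H v).Finite) : star (vH R G H v) = vH R G H v := by
  simp [vH_eq_sum hfin, star_sum]

lemma Xv_mul_vH (hfin : (G.exitEdges H v).Finite) : Xv R G v * vH R G H v = vH R G H v := by
  rw [vH_eq_sum hfin, mul_sub, Xv_mul_self, Finset.mul_sum]
  congr 1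
  refine Finset.sum_congr rfl fun e he => ?_
  rw [← mul_assoc, ← (hfin.mem_toFinset.1 he).1, Xv_mul_Xe]

lemma vH_mul_Xv (hfin : (G.exitEdges H v).Finite) : vH R G H v * Xv R G v = vH R G H v := by
  simpa [star_vH hfin] using congrArg star (Xv_mul_vH (R := R) hfin)

open scoped Classical in
lemma vH_mul_Xe (hfin : (G.exitEdges H v).Finite) (f : G.E) :
    vH R G H v * Xe R G f = if G.s f = v ∧ G.r f ∈ H then Xe R G f else 0 := by
  rw [vH_eq_sum hfin, sub_mul, Finset.sum_mul]
  simp only [Xe_mul_Xg_mul_Xe, Finset.sum_ite_eq', Set.Finite.mem_toFinset, exitEdges,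
    Set.mem_ofPred_eq]
  by_cases hs : G.s f = v
  · rw [← hs, Xv_mul_Xe]
    by_cases hr : G.r f ∈ H <;> simp [hr]
  · rw [Xv_mul_Xe_of_ne (Ne.symm hs)]
    simp [hs]

open scoped Classical in
lemma Xg_mul_vH (hfin : (G.exitEdges H v).Finite) (f : G.E) :
    Xg R G f * vH R G H v = if G.s f = v ∧ G.r f ∈ H then Xg R G f else 0 := by
  have h := congrArg star (vH_mul_Xe (R := R) hfin f)
  rw [star_mul, star_vH hfin, star_Xe] at h
  rw [h]
  split_ifs <;> simp

lemma vH_mul_vH (hA : (G.exitEdges A v).Finite) (hB : (G.exitEdges B v).Finite) :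
    vH R G A v * vH R G B v = vH R G (A ∩ B) v := by
  classical
  have hAB : (G.exitEdges (A ∩ B) v).Finite := exitEdges_inter ▸ hA.union hB
  have hsplit : hAB.toFinset = hA.toFinset ∪ hB.toFinset.filter (fun e => G.r e ∈ A) := by
    ext e
    simp only [Set.Finite.mem_toFinset, Finset.mem_union, Finset.mem_filter, exitEdges,
      Set.mem_ofPred_eq, Set.mem_inter_iff]
    tauto
  have hdisj : Disjoint hA.toFinset (hB.toFinset.filter (fun e => G.r e ∈ A)) :=
    Finset.disjoint_left.2 fun e h1 h2 => (hA.mem_toFinset.1 h1).2 (Finset.mem_filter.1 h2).2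
  have hB_sum : vH R G A v * ∑ e ∈ hB.toFinset, Xe R G e * Xg R G e
      = ∑ e ∈ hB.toFinset.filter (fun e => G.r e ∈ A), Xe R G e * Xg R G e := by
    rw [Finset.sum_filter, Finset.mul_sum]
    refine Finset.sum_congr rfl fun e he => ?_
    rw [← mul_assoc, vH_mul_Xe hA, if_congr (and_iff_right (hB.mem_toFinset.1 he).1) rfl rfl]
    split_ifs <;> simp
  rw [vH_eq_sum hAB, hsplit, Finset.sum_union hdisj, ← sub_sub, ← vH_eq_sum hA,
    vH_eq_sum (H := B) hB, mul_sub, vH_mul_Xv hA, hB_sum]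

lemma IHS_eq_span_vH (hH : G.Hereditary H) :
    IHS R G H S = TwoSidedIdeal.span ((vH R G H ·) '' (H ∪ S)) := by
  rw [IHS, Set.image_union, Set.image_congr fun v hv => (vH_of_mem hH hv).symm]

lemma vH_mem_IHS (hH : G.Hereditary H) (hv : v ∈ H ∪ S) : vH R G H v ∈ IHS R G H S := by
  rw [IHS_eq_span_vH hH]
  exact TwoSidedIdeal.subset_span ⟨v, hv, rfl⟩

variable {u w : G.V}

@[simp] lemma pathE_nil : pathE R G (.nil v) = Xv R G v := rfl
@[simp] lemma pathE_cons (e : G.E) (p : G.Path (G.r e) w) :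
    pathE R G (.cons e p) = Xe R G e * pathE R G p := rfl
@[simp] lemma pathG_nil : pathG R G (.nil v) = Xv R G v := rfl
@[simp] lemma pathG_cons (e : G.E) (p : G.Path (G.r e) w) :
    pathG R G (.cons e p) = pathG R G p * Xg R G e := rfl

lemma Xv_mul_pathE (α : G.Path u w) : Xv R G u * pathE R G α = pathE R G α := by
  cases α with
  | nil => exact Xv_mul_self R G _
  | cons e p => rw [pathE_cons, ← mul_assoc, Xv_mul_Xe]

lemma Xv_mul_pathE_of_ne (α : G.Path u w) (h : v ≠ u) : Xv R G v * pathE R G α = 0 := by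
  rw [← Xv_mul_pathE, ← mul_assoc, Xv_mul_Xv R G _ _ h, zero_mul]

@[simp] lemma star_pathE (α : G.Path u w) : star (pathE R G α) = pathG R G α := by
  induction α with
  | nil => exact star_Xv _
  | cons e p ih => rw [pathE_cons, star_mul, ih, star_Xe, pathG_cons]

@[simp] lemma star_pathG (α : G.Path u w) : star (pathG R G α) = pathE R G α := by
  rw [← star_pathE, star_star]

lemma pathG_mul_pathE (α : G.Path u w) : pathG R G α * pathE R G α = Xv R G w := by
  induction α with
  | nil => exact Xv_mul_self R G _
  | cons e p ih =>
    rw [pathG_cons, pathE_cons, mul_assoc, ← mul_assoc (Xg R G e), Xg_mul_Xe_same,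
      Xv_mul_pathE, ih]

variable (R) in
def monomials (H S : Set G.V) : Set (LPA R G) :=
  {x | ∃ (u v : G.V) (α : G.Path u v) (a : LPA R G),
    v ∈ H ∪ S ∧ x = pathE R G α * vH R G H v * a}

lemma vH_mul_mem_monomials (hfin : (G.exitEdges H v).Finite) (hv : v ∈ H ∪ S) (a : LPA R G) :
    vH R G H v * a ∈ monomials R H S :=
  ⟨v, v, .nil v, a, hv, by rw [pathE_nil, Xv_mul_vH hfin]⟩

lemma monomial_mul_mem_monomials {x : LPA R G} (hx : x ∈ monomials R H S) (b : LPA R G) :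
    x * b ∈ monomials R H S := by
  obtain ⟨u, v, α, a, hv, rfl⟩ := hx
  exact ⟨u, v, α, a * b, hv, by simp only [mul_assoc]⟩

lemma Xv_mul_mem_span_monomials {x : LPA R G} (hx : x ∈ monomials R H S) (w : G.V) :
    Xv R G w * x ∈ Submodule.span R (monomials R H S) := by
  obtain ⟨u, v, α, a, hv, rfl⟩ := hx
  by_cases hw : w = u
  · subst hw
    exact Submodule.subset_span ⟨w, v, α, a, hv, by simp only [← mul_assoc, Xv_mul_pathE]⟩
  · simp only [← mul_assoc, Xv_mul_pathE_of_ne α hw, zero_mul, Submodule.zero_mem]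

lemma Xe_mul_mem_span_monomials {x : LPA R G} (hx : x ∈ monomials R H S) (f : G.E) :
    Xe R G f * x ∈ Submodule.span R (monomials R H S) := by
  obtain ⟨u, v, α, a, hv, rfl⟩ := hx
  by_cases hf : G.r f = u
  · subst hf
    exact Submodule.subset_span ⟨_, v, .cons f α, a, hv, by simp only [pathE_cons, mul_assoc]⟩
  · rw [← Xe_mul_Xv]
    simp only [mul_assoc, ← mul_assoc (Xv R G _), Xv_mul_pathE_of_ne α hf, zero_mul, mul_zero,
      Submodule.zero_mem]

lemma Xg_mul_mem_span_monomials (hH : G.Hereditary H) (hS : S ⊆ G.BH H) {x : LPA R G}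
    (hx : x ∈ monomials R H S) (f : G.E) :
    Xg R G f * x ∈ Submodule.span R (monomials R H S) := by
  obtain ⟨u, v, α, a, hv, rfl⟩ := hx
  have hfin := finite_exitEdges hH hS hv
  cases α with
  | nil =>
    rw [pathE_nil, Xv_mul_vH hfin, ← mul_assoc, Xg_mul_vH hfin]
    split_ifs with hf
    · refine Submodule.subset_span ⟨_, _, .nil (G.r f), Xg R G f * a, Or.inl hf.2, ?_⟩
      rw [pathE_nil, vH_of_mem hH hf.2, Xv_mul_self, ← mul_assoc, Xv_mul_Xg]
    · rw [zero_mul]; exact Submodule.zero_mem _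
  | cons g β =>
    by_cases hfg : f = g
    · subst hfg
      refine Submodule.subset_span ⟨_, v, β, a, hv, ?_⟩
      simp only [pathE_cons, ← mul_assoc, Xg_mul_Xe_same, Xv_mul_pathE]
    · simp only [pathE_cons, ← mul_assoc, Xg_mul_Xe_diff R G f g hfg, zero_mul,
        Submodule.zero_mem]

lemma mul_mem_span_of_forall {A : Type*} [Semiring A] [Algebra R A] {M : Set A} (b : A)
    (h : ∀ m ∈ M, b * m ∈ Submodule.span R M) {x : A} (hx : x ∈ Submodule.span R M) :
    b * x ∈ Submodule.span R M :=
  Submodule.span_le (p := (Submodule.span R M).comap (LinearMap.mulLeft R b)) |>.2 h hx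

lemma mul_mem_span_monomials (hH : G.Hereditary H) (hS : S ⊆ G.BH H) (b : LPA R G)
    {x : LPA R G} (hx : x ∈ Submodule.span R (monomials R H S)) :
    b * x ∈ Submodule.span R (monomials R H S) := by
  induction b using induction generalizing x with
  | scalar r => rw [← Algebra.smul_def]; exact Submodule.smul_mem _ r hx
  | vertex w =>
    exact mul_mem_span_of_forall _ (fun m hm => Xv_mul_mem_span_monomials hm w) hx
  | edge f =>
    exact mul_mem_span_of_forall _ (fun m hm => Xe_mul_mem_span_monomials hm f) hx
  | ghost f =>
    exact mul_mem_span_of_forall _ (fun m hm => Xg_mul_mem_span_monomials hH hS hm f) hx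
  | add a b ha hb => rw [add_mul]; exact Submodule.add_mem _ (ha hx) (hb hx)
  | mul a b ha hb => rw [mul_assoc]; exact ha (hb hx)

lemma IHS_le_span_monomials (hH : G.Hereditary H) (hS : S ⊆ G.BH H) {x : LPA R G}
    (hx : x ∈ IHS R G H S) : x ∈ Submodule.span R (monomials R H S) := by
  rw [IHS_eq_span_vH hH] at hx
  induction hx using TwoSidedIdeal.span_induction with
  | mem x hx =>
    obtain ⟨v, hv, rfl⟩ := hx
    simpa using Submodule.subset_span (vH_mul_mem_monomials (finite_exitEdges hH hS hv) hv 1)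
  | zero => exact Submodule.zero_mem _
  | add x y _ _ hx hy => exact Submodule.add_mem _ hx hy
  | neg x _ hx => exact Submodule.neg_mem _ hx
  | left_absorb a x _ hx => exact mul_mem_span_monomials hH hS a hx
  | right_absorb b x _ hx =>
    exact Submodule.span_le (p := (Submodule.span R _).comap (LinearMap.mulRight R b)) |>.2
      (fun m hm => Submodule.subset_span (monomial_mul_mem_monomials hm b)) hx

variable (R) in
noncomputable def pathIdem (H : Set G.V) (α : G.Path u v) : LPA R G :=
  pathE R G α * vH R G H v * pathG R G α

lemma pathIdem_nil (hfin : (G.exitEdges H v).Finite) : pathIdem R H (.nil v) = vH R G H v := by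
  rw [pathIdem, pathE_nil, pathG_nil, Xv_mul_vH hfin, vH_mul_Xv hfin]

lemma pathIdem_cons (f : G.E) (β : G.Path (G.r f) v) :
    pathIdem R H (.cons f β) = Xe R G f * pathIdem R H β * Xg R G f := by
  simp only [pathIdem, pathE_cons, pathG_cons, mul_assoc]

lemma Xv_mul_pathIdem (α : G.Path u v) : Xv R G u * pathIdem R H α = pathIdem R H α := by
  rw [pathIdem, ← mul_assoc, ← mul_assoc, Xv_mul_pathE]

lemma isSelfAdjoint_pathIdem (hfin : (G.exitEdges H v).Finite) (α : G.Path u v) :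
    IsSelfAdjoint (pathIdem R H α) := by
  rw [isSelfAdjoint_iff, pathIdem, star_mul, star_mul, star_pathG, star_pathE, star_vH hfin,
    mul_assoc]

lemma pathIdem_mul_monomial (hfin : (G.exitEdges H v).Finite) (α : G.Path u v) (a : LPA R G) :
    pathIdem R H α * (pathE R G α * vH R G H v * a) = pathE R G α * vH R G H v * a := by
  simp only [pathIdem, mul_assoc]
  rw [← mul_assoc (pathG R G α), pathG_mul_pathE, ← mul_assoc (Xv R G v), Xv_mul_vH hfin,
    ← mul_assoc (vH R G H v), vH_mul_vH hfin hfin, Set.inter_self]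

lemma isIdempotentElem_pathIdem (hfin : (G.exitEdges H v).Finite) (α : G.Path u v) :
    IsIdempotentElem (pathIdem R H α) :=
  pathIdem_mul_monomial hfin α _

open scoped Classical in
lemma vH_mul_pathIdem_cons (hfin : (G.exitEdges H v).Finite) (f : G.E) (β : G.Path (G.r f) w) :
    vH R G H v * pathIdem R H (.cons f β) =
      if G.s f = v ∧ G.r f ∈ H then pathIdem R H (.cons f β) else 0 := by
  rw [pathIdem_cons, ← mul_assoc, ← mul_assoc, vH_mul_Xe hfin]
  split_ifs <;> simp

lemma vH_mul_vH_of_ne {w : G.V} (hv : (G.exitEdges H v).Finite) (hw : (G.exitEdges H w).Finite)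
    (h : v ≠ w) : vH R G H v * vH R G H w = 0 := by
  rw [← vH_mul_Xv hv, ← Xv_mul_vH hw, mul_assoc, ← mul_assoc (Xv R G v), Xv_mul_Xv R G _ _ h,
    zero_mul, mul_zero]

lemma commute_vH_pathIdem {v' : G.V} (hfin : (G.exitEdges H v).Finite)
    (hfin' : (G.exitEdges H v').Finite) (α : G.Path u v') :
    Commute (vH R G H v) (pathIdem R H α) := by
  cases α with
  | nil =>
    rw [pathIdem_nil hfin']
    by_cases hv : v = u
    · subst hv; exact Commute.refl _
    · rw [Commute, SemiconjBy, vH_mul_vH_of_ne hfin hfin' hv,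
        vH_mul_vH_of_ne hfin' hfin (Ne.symm hv)]
  | cons f β =>
    rw [IsSelfAdjoint.commute_iff (star_vH hfin) (isSelfAdjoint_pathIdem hfin' _),
      vH_mul_pathIdem_cons hfin]
    split_ifs
    · exact isSelfAdjoint_pathIdem hfin' _
    · exact IsSelfAdjoint.zero _

lemma pathIdem_cons_mul_pathIdem_cons {v' : G.V} (f : G.E) (β : G.Path (G.r f) v)
    (β' : G.Path (G.r f) v') :
    pathIdem R H (.cons f β) * pathIdem R H (.cons f β') =
      Xe R G f * (pathIdem R H β * pathIdem R H β') * Xg R G f := by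
  simp only [pathIdem_cons, mul_assoc]
  rw [← mul_assoc (Xg R G f), Xg_mul_Xe_same, ← mul_assoc (Xv R G _), Xv_mul_pathIdem]

lemma pathIdem_cons_mul_pathIdem_cons_of_ne {v' : G.V} {f g : G.E} (β : G.Path (G.r f) v)
    (β' : G.Path (G.r g) v') (hfg : f ≠ g) :
    pathIdem R H (.cons f β) * pathIdem R H (.cons g β') = 0 := by
  simp only [pathIdem_cons, mul_assoc]
  rw [← mul_assoc (Xg R G f), Xg_mul_Xe_diff R G f g hfg, zero_mul, mul_zero, mul_zero]

lemma commute_pathIdem {v' u' : G.V} (hfin : (G.exitEdges H v).Finite)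
    (hfin' : (G.exitEdges H v').Finite) (α : G.Path u v) (α' : G.Path u' v') :
    Commute (pathIdem R H α) (pathIdem R H α') := by
  induction α generalizing u' with
  | nil => rw [pathIdem_nil hfin]; exact commute_vH_pathIdem hfin hfin' α'
  | cons f β ih =>
    cases α' with
    | nil => rw [pathIdem_nil hfin']; exact (commute_vH_pathIdem hfin' hfin _).symm
    | cons g β' =>
      by_cases hfg : f = g
      · subst hfg
        rw [Commute, SemiconjBy, pathIdem_cons_mul_pathIdem_cons,
          pathIdem_cons_mul_pathIdem_cons, (ih hfin β').eq]
      · rw [Commute, SemiconjBy, pathIdem_cons_mul_pathIdem_cons_of_ne _ _ hfg,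
          pathIdem_cons_mul_pathIdem_cons_of_ne _ _ (Ne.symm hfg)]

variable (R) in
def pathIdems (H S : Set G.V) : Set (LPA R G) :=
  {e | ∃ (u v : G.V) (α : G.Path u v), v ∈ H ∪ S ∧ e = pathIdem R H α}

lemma exists_mul_eq_of_mem_IHS (hH : G.Hereditary H) (hS : S ⊆ G.BH H) {x : LPA R G}
    (hx : x ∈ IHS R G H S) : ∃ u ∈ IHS R G H S, u * x = x := by
  have hfin {v : G.V} (hv : v ∈ H ∪ S) := finite_exitEdges hH hS hv
  have hC : pathIdems R H S ⊆ (IHS R G H S).asIdeal := by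
    rintro _ ⟨u, v, α, hv, rfl⟩
    exact TwoSidedIdeal.mem_asIdeal.2 <| TwoSidedIdeal.mul_mem_right _ _ _ <|
      TwoSidedIdeal.mul_mem_left _ _ _ (vH_mem_IHS hH hv)
  have hidem : ∀ e ∈ pathIdems R H S, IsIdempotentElem e := by
    rintro _ ⟨u, v, α, hv, rfl⟩
    exact isIdempotentElem_pathIdem (hfin hv) α
  have hcomm : ∀ e ∈ pathIdems R H S, ∀ f ∈ pathIdems R H S, Commute e f := by
    rintro _ ⟨u, v, α, hv, rfl⟩ _ ⟨u', v', α', hv', rfl⟩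
    exact commute_pathIdem (hfin hv) (hfin hv') α α'
  have hunit : ∀ m ∈ monomials R H S, ∃ e ∈ pathIdems R H S, e * m = m := by
    rintro _ ⟨u, v, α, a, hv, rfl⟩
    exact ⟨pathIdem R H α, ⟨u, v, α, hv, rfl⟩, pathIdem_mul_monomial (hfin hv) α a⟩
  obtain ⟨u, hu, hux⟩ := (IHS R G H S).asIdeal.exists_mul_eq_of_mem_span hC hidem hcomm hunit
    (IHS_le_span_monomials hH hS hx)
  exact ⟨u, TwoSidedIdeal.mem_asIdeal.1 hu, hux⟩

variable {H₁ S₁ H₂ S₂ : Set G.V}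

lemma vH_mul_monomial_mem_IHS_inter (hH₁ : G.Hereditary H₁) (hS₁ : S₁ ⊆ G.BH H₁)
    (hH₂ : G.Hereditary H₂) (hS₂ : S₂ ⊆ G.BH H₂) (hv : v ∈ H₁ ∪ S₁) {m : LPA R G}
    (hm : m ∈ monomials R H₂ S₂) :
    vH R G H₁ v * m ∈ IHS R G (H₁ ∩ H₂) ((H₁ ∪ S₁) ∩ (H₂ ∪ S₂) ∩ G.BH (H₁ ∩ H₂)) := by
  obtain ⟨u, w, β, a, hw, rfl⟩ := hm
  have hfin₁ := finite_exitEdges hH₁ hS₁ hv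
  have hfin₂ := finite_exitEdges hH₂ hS₂ hw
  have hmem {x : G.V} (hx : x ∈ (H₁ ∪ S₁) ∩ (H₂ ∪ S₂)) :=
    vH_mem_IHS (R := R) (hH₁.inter hH₂) (mem_inter_union_BH_inter hH₁ hS₁ hH₂ hS₂ hx)
  cases β with
  | nil =>
    by_cases hvw : v = u
    · subst hvw
      rw [pathE_nil, Xv_mul_vH hfin₂, ← mul_assoc, vH_mul_vH hfin₁ hfin₂]
      exact TwoSidedIdeal.mul_mem_right _ _ _ (hmem ⟨hv, hw⟩)
    · rw [pathE_nil, ← vH_mul_Xv hfin₁]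
      simp only [← mul_assoc]
      rw [mul_assoc (vH R G H₁ v), Xv_mul_Xv R G _ _ hvw]
      simp
  | cons f β =>
    simp only [pathE_cons, ← mul_assoc]
    rw [vH_mul_Xe hfin₁]
    split_ifs with hf
    · have hw₁ : w ∈ H₁ := β.mem_of_hereditary hH₁ hf.2
      rw [vH_congr (B := H₁ ∩ H₂)
        (by rw [exitEdges_inter, exitEdges_eq_empty hH₁ hw₁, Set.empty_union])]
      exact TwoSidedIdeal.mul_mem_right _ _ _ <| TwoSidedIdeal.mul_mem_left _ _ _ <|
        hmem ⟨Or.inl hw₁, hw⟩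
    · simp

lemma mul_mem_IHS_inter (hH₁ : G.Hereditary H₁) (hS₁ : S₁ ⊆ G.BH H₁)
    (hH₂ : G.Hereditary H₂) (hS₂ : S₂ ⊆ G.BH H₂) {x y : LPA R G} (hx : x ∈ IHS R G H₁ S₁)
    (hy : y ∈ IHS R G H₂ S₂) :
    x * y ∈ IHS R G (H₁ ∩ H₂) ((H₁ ∪ S₁) ∩ (H₂ ∪ S₂) ∩ G.BH (H₁ ∩ H₂)) := by
  rw [IHS_eq_span_vH hH₁] at hx
  induction hx using TwoSidedIdeal.span_induction generalizing y with
  | mem x hx =>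
    obtain ⟨v, hv, rfl⟩ := hx
    replace hy := IHS_le_span_monomials hH₂ hS₂ hy
    induction hy using Submodule.span_induction with
    | mem m hm => exact vH_mul_monomial_mem_IHS_inter hH₁ hS₁ hH₂ hS₂ hv hm
    | zero => simp
    | add y z _ _ hy hz => rw [mul_add]; exact TwoSidedIdeal.add_mem _ hy hz
    | smul r y _ hy =>
      rw [mul_smul_comm, Algebra.smul_def]; exact TwoSidedIdeal.mul_mem_left _ _ _ hy
  | zero => simp
  | add x x' _ _ hx hx' => rw [add_mul]; exact TwoSidedIdeal.add_mem _ (hx hy) (hx' hy)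
  | neg x _ hx =>
    convert TwoSidedIdeal.neg_mem _ (hx hy) using 1
    exact neg_mul x y
  | left_absorb a x _ hx => rw [mul_assoc]; exact TwoSidedIdeal.mul_mem_left _ _ _ (hx hy)
  | right_absorb b x _ hx =>
    rw [mul_assoc]; exact hx (TwoSidedIdeal.mul_mem_left _ _ _ hy)

lemma IHS_mono {H' S' : Set G.V} (hH : G.Hereditary H) (hS : S ⊆ G.BH H)
    (hS' : S' ⊆ G.BH H') (hH'H : H' ⊆ H) (hS'S : S' ⊆ H ∪ S) :
    IHS R G H' S' ≤ IHS R G H S := by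
  refine TwoSidedIdeal.span_le.2 ?_
  rintro _ (⟨v, hv, rfl⟩ | ⟨v, hv, rfl⟩)
  · exact TwoSidedIdeal.subset_span (Or.inl ⟨v, hH'H hv, rfl⟩)
  · show vH R G H' v ∈ _
    rw [← Set.inter_eq_right.2 hH'H, ← vH_mul_vH (finite_exitEdges hH hS (hS'S hv)) (hS' hv).2.2.1]
    exact TwoSidedIdeal.mul_mem_right _ _ _ (vH_mem_IHS hH (hS'S hv))

end LeavittPathAlgebra

open LeavittPathAlgebra in
/-- `I(H₁,S₁) ∩ I(H₂,S₂) = I(H₁∩H₂, (H₁∪S₁)∩(H₂∪S₂)∩B_{H₁∩H₂})`. -/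
theorem IHS_inter (G : LPGraph) (R : Type) [CommRing R] (H₁ S₁ H₂ S₂ : Set G.V)
    (h₁ : G.Admissible H₁ S₁) (h₂ : G.Admissible H₂ S₂) :
    IHS R G H₁ S₁ ⊓ IHS R G H₂ S₂ =
      IHS R G (H₁ ∩ H₂) ((H₁ ∪ S₁) ∩ (H₂ ∪ S₂) ∩ G.BH (H₁ ∩ H₂)) := by
  obtain ⟨hH₁, -, hS₁⟩ := h₁
  obtain ⟨hH₂, -, hS₂⟩ := h₂
  have hS : (H₁ ∪ S₁) ∩ (H₂ ∪ S₂) ∩ G.BH (H₁ ∩ H₂) ⊆ G.BH (H₁ ∩ H₂) := Set.inter_subset_right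
  refine le_antisymm (fun x hx => ?_) (le_inf ?_ ?_)
  · obtain ⟨hx₁, hx₂⟩ := (TwoSidedIdeal.mem_inf _).1 hx
    obtain ⟨u, hu, hux⟩ := exists_mul_eq_of_mem_IHS hH₁ hS₁ hx₁
    rw [← hux]
    exact mul_mem_IHS_inter hH₁ hS₁ hH₂ hS₂ hu hx₂
  · exact IHS_mono hH₁ hS₁ hS Set.inter_subset_left fun v hv => hv.1.1
  · exact IHS_mono hH₂ hS₂ hS Set.inter_subset_right fun v hv => hv.1.2
end

section
/- Let E be a graph and R a unital commutative ring. If (H,S) is an admissible pair in E, then the quotient algebra L_R(E)/I(H,S) is isomorphic as an R-algebra to the Leavitt path algebra L_R(E/(H,S)) of the quotient graph. -/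
variable (R : Type) [CommRing R] (G : LPGraph)

/-!
The quotient graph comes with the map `E/(H,S) → E` forgetting primes. Along it, `r` maps the lifts
of an edge bijectively onto the lifts of its range and, `H` being saturated, every lift of a
regular vertex emits an edge. These two facts make "sum of all lifts" a Cuntz–Krieger `E`-family in
`L_R(E/(H,S))`, i.e. a map `Φ : L_R(E) → L_R(E/(H,S))` with `v ↦ v + v'` on `B_H \ S` and `v ↦ 0`
on `H`; it kills `v^H` for `v ∈ S`, so it factors through `L_R(E)/I(H,S)`.

Conversely, in `L_R(E)/I(H,S)` every `v ∈ B_H \ S` splits into the orthogonal idempotents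
`v - v^H = ∑_{s(e)=v, r(e)∉H} e e*` and `v^H`. Sending `v'` to `v^H`, every other vertex of
`E/(H,S)` to what is left of it, and an edge `e` or `e'` to `e` times the image of its range,
gives a Cuntz–Krieger `E/(H,S)`-family, hence a map `Ψ`; `Φ` and `Ψ` are inverse on generators.
-/

open scoped Classical

theorem Set.finite_sumElim_val_fiber {α : Type*} {p q : α → Prop} (a : α) :
    (Sum.elim (Subtype.val : Subtype p → α) (Subtype.val : Subtype q → α) ⁻¹' {a}).Finite := by
  rw [Set.preimage_sumElim]
  exact ((Set.subsingleton_singleton.preimage Subtype.val_injective).finite.image _).union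
    ((Set.subsingleton_singleton.preimage Subtype.val_injective).finite.image _)

theorem Finset.sum_subtype_val_fiber {α M : Type*} [AddCommMonoid M] {p : α → Prop}
    [DecidablePred p] {a : α} (t : Finset (Subtype p)) (ht : ∀ x, x ∈ t ↔ x.1 = a)
    (f : Subtype p → M) :
    ∑ x ∈ t, f x = if h : p a then f ⟨a, h⟩ else 0 := by
  split_ifs with h
  · exact Finset.sum_eq_single_of_mem _ ((ht _).2 rfl) fun x hx hne =>
      absurd (Subtype.ext ((ht x).1 hx)) hne
  · exact Finset.sum_eq_zero fun x hx => absurd (((ht x).1 hx) ▸ x.2) h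

theorem Finset.sum_sumElim_val_fiber {α M : Type*} [AddCommMonoid M] {p q : α → Prop}
    [DecidablePred p] [DecidablePred q] {a : α} (t : Finset (Subtype p ⊕ Subtype q))
    (ht : ∀ x, x ∈ t ↔ Sum.elim Subtype.val Subtype.val x = a)
    (f : Subtype p ⊕ Subtype q → M) :
    ∑ x ∈ t, f x = (if h : p a then f (.inl ⟨a, h⟩) else 0) +
      (if h : q a then f (.inr ⟨a, h⟩) else 0) := by
  rw [← Finset.toLeft_disjSum_toRight (u := t), Finset.sum_disjSum]
  congr 1 <;> exact Finset.sum_subtype_val_fiber _ (fun x => by simp [ht]) _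

structure LeavittFamily (A : Type*) [Semiring A] [Algebra R A] where
  vertex : G.V → A
  edge : G.E → A
  ghost : G.E → A
  vertex_mul_self : ∀ v, vertex v * vertex v = vertex v
  vertex_mul_vertex : ∀ v w, v ≠ w → vertex v * vertex w = 0
  vertex_src_mul_edge : ∀ e, vertex (G.s e) * edge e = edge e
  edge_mul_vertex_rng : ∀ e, edge e * vertex (G.r e) = edge e
  vertex_rng_mul_ghost : ∀ e, vertex (G.r e) * ghost e = ghost e
  ghost_mul_vertex_src : ∀ e, ghost e * vertex (G.s e) = ghost e
  ghost_mul_edge_self : ∀ e, ghost e * edge e = vertex (G.r e)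
  ghost_mul_edge : ∀ e f, e ≠ f → ghost e * edge f = 0
  ck2 : ∀ v (h : {e | G.s e = v}.Finite), {e | G.s e = v}.Nonempty →
    vertex v = ∑ e ∈ h.toFinset, edge e * ghost e

namespace LPA

variable {R G}

theorem algHom_ext {A : Type*} [Semiring A] [Algebra R A] {f g : LPA R G →ₐ[R] A}
    (hv : ∀ v, f (Xv R G v) = g (Xv R G v)) (he : ∀ e, f (Xe R G e) = g (Xe R G e))
    (hg : ∀ e, f (Xg R G e) = g (Xg R G e)) : f = g :=
  RingQuot.ringQuot_ext' _ _ _ <| FreeAlgebra.hom_ext <| funext fun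
    | .vertex v => hv v
    | .edge e => he e
    | .ghost e => hg e

end LPA

namespace LeavittFamily

variable {R G} {A B : Type*} [Semiring A] [Algebra R A] [Semiring B] [Algebra R B]
  (P : LeavittFamily R G A)

noncomputable def lift : LPA R G →ₐ[R] A :=
  RingQuot.liftAlgHom R ⟨FreeAlgebra.lift R fun
      | .vertex v => P.vertex v
      | .edge e => P.edge e
      | .ghost e => P.ghost e, by
    intro a b h
    induction h with
    | idem v => simpa [fv] using P.vertex_mul_self v
    | orth v w h => simpa [fv] using P.vertex_mul_vertex v w h
    | edge_src e => simpa [fv, fe] using P.vertex_src_mul_edge e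
    | edge_rng e => simpa [fv, fe] using P.edge_mul_vertex_rng e
    | ghost_rng e => simpa [fv, fg] using P.vertex_rng_mul_ghost e
    | ghost_src e => simpa [fv, fg] using P.ghost_mul_vertex_src e
    | ck1_same e => simpa [fv, fe, fg] using P.ghost_mul_edge_self e
    | ck1_diff e f h => simpa [fe, fg] using P.ghost_mul_edge e f h
    | ck2 v h1 h2 => simpa [fv, fe, fg] using P.ck2 v h1 h2⟩

@[simp] theorem lift_Xv (v : G.V) : P.lift (Xv R G v) = P.vertex v := by
  simp [lift, Xv, fv]

@[simp] theorem lift_Xe (e : G.E) : P.lift (Xe R G e) = P.edge e := by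
  simp [lift, Xe, fe]

@[simp] theorem lift_Xg (e : G.E) : P.lift (Xg R G e) = P.ghost e := by
  simp [lift, Xg, fg]

variable (R G) in
noncomputable def canonical : LeavittFamily R G (LPA R G) where
  vertex := Xv R G
  edge := Xe R G
  ghost := Xg R G
  vertex_mul_self := Xv_mul_self R G
  vertex_mul_vertex := Xv_mul_Xv R G
  vertex_src_mul_edge := Xv_mul_Xe R G
  edge_mul_vertex_rng := Xe_mul_Xv R G
  vertex_rng_mul_ghost := Xv_mul_Xg R G
  ghost_mul_vertex_src := Xg_mul_Xv R G
  ghost_mul_edge_self := Xg_mul_Xe_same R G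
  ghost_mul_edge := Xg_mul_Xe_diff R G
  ck2 := Xv_ck2 R G

noncomputable def map (f : A →ₐ[R] B) : LeavittFamily R G B where
  vertex := f ∘ P.vertex
  edge := f ∘ P.edge
  ghost := f ∘ P.ghost
  vertex_mul_self v := by simp only [Function.comp, ← map_mul, P.vertex_mul_self]
  vertex_mul_vertex v w h := by
    simp only [Function.comp, ← map_mul, P.vertex_mul_vertex v w h, map_zero]
  vertex_src_mul_edge e := by simp only [Function.comp, ← map_mul, P.vertex_src_mul_edge]
  edge_mul_vertex_rng e := by simp only [Function.comp, ← map_mul, P.edge_mul_vertex_rng]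
  vertex_rng_mul_ghost e := by simp only [Function.comp, ← map_mul, P.vertex_rng_mul_ghost]
  ghost_mul_vertex_src e := by simp only [Function.comp, ← map_mul, P.ghost_mul_vertex_src]
  ghost_mul_edge_self e := by simp only [Function.comp, ← map_mul, P.ghost_mul_edge_self]
  ghost_mul_edge e f h := by
    simp only [Function.comp, ← map_mul, P.ghost_mul_edge e f h, map_zero]
  ck2 v h1 h2 := by simp only [Function.comp, ← map_mul, ← map_sum, ← P.ck2 v h1 h2]

@[simp] theorem canonical_vertex : (canonical R G).vertex = Xv R G := rfl

@[simp] theorem canonical_edge : (canonical R G).edge = Xe R G := rfl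

@[simp] theorem canonical_ghost : (canonical R G).ghost = Xg R G := rfl

@[simp] theorem map_vertex (f : A →ₐ[R] B) : (P.map f).vertex = f ∘ P.vertex := rfl

@[simp] theorem map_edge (f : A →ₐ[R] B) : (P.map f).edge = f ∘ P.edge := rfl

@[simp] theorem map_ghost (f : A →ₐ[R] B) : (P.map f).ghost = f ∘ P.ghost := rfl

theorem lift_canonical : (canonical R G).lift = AlgHom.id R (LPA R G) :=
  LPA.algHom_ext (fun _ => lift_Xv _ _) (fun _ => lift_Xe _ _) (fun _ => lift_Xg _ _)

theorem lift_map (f : A →ₐ[R] B) : (P.map f).lift = f.comp P.lift :=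
  LPA.algHom_ext (by simp) (by simp) (by simp)

theorem vertex_mul_vertex_eq_ite (v w : G.V) :
    P.vertex v * P.vertex w = if v = w then P.vertex v else 0 := by
  split_ifs with h
  · rw [h, P.vertex_mul_self]
  · exact P.vertex_mul_vertex v w h

theorem vertex_mul_edge (v : G.V) (e : G.E) :
    P.vertex v * P.edge e = if v = G.s e then P.edge e else 0 := by
  conv_lhs => rw [← P.vertex_src_mul_edge e, ← mul_assoc, vertex_mul_vertex_eq_ite]
  split_ifs with h <;> simp [h, P.vertex_src_mul_edge]

theorem edge_mul_vertex (e : G.E) (v : G.V) :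
    P.edge e * P.vertex v = if G.r e = v then P.edge e else 0 := by
  conv_lhs => rw [← P.edge_mul_vertex_rng e, mul_assoc, vertex_mul_vertex_eq_ite]
  split_ifs with h <;> simp [P.edge_mul_vertex_rng]

theorem vertex_mul_ghost (v : G.V) (e : G.E) :
    P.vertex v * P.ghost e = if v = G.r e then P.ghost e else 0 := by
  conv_lhs => rw [← P.vertex_rng_mul_ghost e, ← mul_assoc, vertex_mul_vertex_eq_ite]
  split_ifs with h <;> simp [h, P.vertex_rng_mul_ghost]

theorem ghost_mul_vertex (e : G.E) (v : G.V) :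
    P.ghost e * P.vertex v = if G.s e = v then P.ghost e else 0 := by
  conv_lhs => rw [← P.ghost_mul_vertex_src e, mul_assoc, vertex_mul_vertex_eq_ite]
  split_ifs with h <;> simp [P.ghost_mul_vertex_src]

theorem ghost_mul_edge_eq_ite (e f : G.E) :
    P.ghost e * P.edge f = if e = f then P.vertex (G.r e) else 0 := by
  split_ifs with h
  · rw [h, P.ghost_mul_edge_self]
  · exact P.ghost_mul_edge e f h

theorem edge_mul_ghost_of_rng_ne {e f : G.E} (h : G.r e ≠ G.r f) : P.edge e * P.ghost f = 0 := by
  rw [← P.edge_mul_vertex_rng e, mul_assoc, vertex_mul_ghost, if_neg h, mul_zero]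

noncomputable def edgeProj (T : Finset G.E) : A := ∑ e ∈ T, P.edge e * P.ghost e

theorem lift_edgeProj (T : Finset G.E) : P.lift ((canonical R G).edgeProj T) = P.edgeProj T := by
  simp [edgeProj]

theorem map_edgeProj (f : A →ₐ[R] B) (T : Finset G.E) :
    (P.map f).edgeProj T = f (P.edgeProj T) := by
  simp [edgeProj]

theorem edgeProj_mul_edge (T : Finset G.E) (e : G.E) :
    P.edgeProj T * P.edge e = if e ∈ T then P.edge e else 0 := by
  simp only [edgeProj, Finset.sum_mul, mul_assoc, ghost_mul_edge_eq_ite, mul_ite, mul_zero,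
    P.edge_mul_vertex_rng, Finset.sum_ite_eq']

theorem ghost_mul_edgeProj (e : G.E) (T : Finset G.E) :
    P.ghost e * P.edgeProj T = if e ∈ T then P.ghost e else 0 := by
  simp only [edgeProj, Finset.mul_sum, ← mul_assoc, ghost_mul_edge_eq_ite, ite_mul, zero_mul,
    P.vertex_rng_mul_ghost, Finset.sum_ite_eq]

theorem edgeProj_mul_self (T : Finset G.E) : P.edgeProj T * P.edgeProj T = P.edgeProj T := by
  nth_rw 2 [edgeProj]
  simp only [Finset.mul_sum, ← mul_assoc, edgeProj_mul_edge, ite_mul, zero_mul,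
    Finset.sum_ite_mem, Finset.inter_self]
  rfl

theorem vertex_mul_edgeProj {v : G.V} {T : Finset G.E} (hT : ∀ e ∈ T, G.s e = v) :
    P.vertex v * P.edgeProj T = P.edgeProj T := by
  refine (Finset.mul_sum _ _ _).trans (Finset.sum_congr rfl fun e he => ?_)
  rw [← mul_assoc, ← hT e he, P.vertex_src_mul_edge]

theorem edgeProj_mul_vertex {v : G.V} {T : Finset G.E} (hT : ∀ e ∈ T, G.s e = v) :
    P.edgeProj T * P.vertex v = P.edgeProj T := by
  refine (Finset.sum_mul _ _ _).trans (Finset.sum_congr rfl fun e he => ?_)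
  rw [mul_assoc, ← hT e he, P.ghost_mul_vertex_src]

theorem sum_vertex_mul_sum_vertex (X Y : Finset G.V) :
    (∑ v ∈ X, P.vertex v) * (∑ w ∈ Y, P.vertex w) = ∑ v ∈ X ∩ Y, P.vertex v := by
  simp only [Finset.sum_mul_sum, vertex_mul_vertex_eq_ite, Finset.sum_ite_eq, Finset.sum_ite_mem]

theorem sum_ghost_mul_sum_edge (X Y : Finset G.E) :
    (∑ e ∈ X, P.ghost e) * (∑ f ∈ Y, P.edge f) = ∑ e ∈ X ∩ Y, P.vertex (G.r e) := by
  simp only [Finset.sum_mul_sum, ghost_mul_edge_eq_ite, Finset.sum_ite_eq, Finset.sum_ite_mem]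

theorem sum_vertex_mul_edge (X : Finset G.V) (e : G.E) :
    (∑ v ∈ X, P.vertex v) * P.edge e = if G.s e ∈ X then P.edge e else 0 := by
  simp only [Finset.sum_mul, vertex_mul_edge, Finset.sum_ite_eq']

theorem edge_mul_sum_vertex (e : G.E) (X : Finset G.V) :
    P.edge e * (∑ v ∈ X, P.vertex v) = if G.r e ∈ X then P.edge e else 0 := by
  simp only [Finset.mul_sum, edge_mul_vertex, Finset.sum_ite_eq]

theorem sum_vertex_mul_ghost (X : Finset G.V) (e : G.E) :
    (∑ v ∈ X, P.vertex v) * P.ghost e = if G.r e ∈ X then P.ghost e else 0 := by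
  simp only [Finset.sum_mul, vertex_mul_ghost, Finset.sum_ite_eq']

theorem ghost_mul_sum_vertex (e : G.E) (X : Finset G.V) :
    P.ghost e * (∑ v ∈ X, P.vertex v) = if G.s e ∈ X then P.ghost e else 0 := by
  simp only [Finset.mul_sum, ghost_mul_vertex, Finset.sum_ite_eq]

theorem vertex_eq_edgeProj {v : G.V} {T : Finset G.E} (hT : ∀ e, e ∈ T ↔ G.s e = v)
    (hne : T.Nonempty) : P.vertex v = P.edgeProj T := by
  have hset : {e | G.s e = v} = T := by ext e; simp [hT]
  have hfin : {e | G.s e = v}.Finite := hset ▸ T.finite_toSet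
  rw [P.ck2 v hfin (hset ▸ Finset.coe_nonempty.2 hne), edgeProj]
  congr 1
  ext e
  simp [hT]

end LeavittFamily

namespace LPGraph

/-- The conditions under which sums over fibres of the generators of `L_R(K)` satisfy the
relations of `L_R(G)`. -/
structure RangeCover (K G : LPGraph) where
  vmap : K.V → G.V
  emap : K.E → G.E
  vmap_s : ∀ y, vmap (K.s y) = G.s (emap y)
  vmap_r : ∀ y, vmap (K.r y) = G.r (emap y)
  finite_vertexFiber : ∀ v, (vmap ⁻¹' {v}).Finite
  bijOn_r : ∀ e, Set.BijOn K.r (emap ⁻¹' {e}) (vmap ⁻¹' {G.r e})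
  nonempty_of_regular : ∀ x, {e | G.s e = vmap x}.Finite → {e | G.s e = vmap x}.Nonempty →
    {y | K.s y = x}.Nonempty

namespace RangeCover

variable {K G : LPGraph} (c : RangeCover K G)

theorem finite_edgeFiber (e : G.E) : (c.emap ⁻¹' {e}).Finite :=
  Set.Finite.of_finite_image ((c.finite_vertexFiber _).subset (c.bijOn_r e).mapsTo.image_subset)
    (c.bijOn_r e).injOn

noncomputable def vertexFiber (v : G.V) : Finset K.V := (c.finite_vertexFiber v).toFinset

noncomputable def edgeFiber (e : G.E) : Finset K.E := (c.finite_edgeFiber e).toFinset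

@[simp] theorem mem_vertexFiber {v : G.V} {x : K.V} : x ∈ c.vertexFiber v ↔ c.vmap x = v := by
  simp [vertexFiber]

@[simp] theorem mem_edgeFiber {e : G.E} {y : K.E} : y ∈ c.edgeFiber e ↔ c.emap y = e := by
  simp [edgeFiber]

theorem rng_injOn_edgeFiber (e : G.E) : Set.InjOn K.r (c.edgeFiber e) := by
  simpa [edgeFiber] using (c.bijOn_r e).injOn

theorem sum_edgeFiber_rng {M : Type*} [AddCommMonoid M] (e : G.E) (f : K.V → M) :
    ∑ y ∈ c.edgeFiber e, f (K.r y) = ∑ x ∈ c.vertexFiber (G.r e), f x :=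
  Finset.sum_nbij K.r (fun y hy => by rw [c.mem_vertexFiber, c.vmap_r, c.mem_edgeFiber.1 hy])
    (c.rng_injOn_edgeFiber e) (by simpa [edgeFiber, vertexFiber] using (c.bijOn_r e).surjOn)
    fun _ _ => rfl

variable {R} {A : Type*} [Semiring A] [Algebra R A] (Q : LeavittFamily R K A)

theorem sum_edge_mul_sum_ghost (e : G.E) :
    (∑ y ∈ c.edgeFiber e, Q.edge y) * (∑ y ∈ c.edgeFiber e, Q.ghost y) =
      ∑ y ∈ c.edgeFiber e, Q.edge y * Q.ghost y := by
  rw [Finset.sum_mul_sum]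
  refine Finset.sum_congr rfl fun y hy => Finset.sum_eq_single_of_mem y hy fun y' hy' hne => ?_
  exact Q.edge_mul_ghost_of_rng_ne fun h => hne (c.rng_injOn_edgeFiber e hy' hy h.symm)

theorem sum_biUnion_edgeFiber {M : Type*} [AddCommMonoid M] (T : Finset G.E) (f : K.E → M) :
    ∑ y ∈ T.biUnion c.edgeFiber, f y = ∑ e ∈ T, ∑ y ∈ c.edgeFiber e, f y := by
  refine Finset.sum_biUnion fun e _ f _ hef => Finset.disjoint_left.2 fun y hy hy' => ?_
  exact hef ((c.mem_edgeFiber.1 hy).symm.trans (c.mem_edgeFiber.1 hy'))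

noncomputable def pull : LeavittFamily R G A where
  vertex v := ∑ x ∈ c.vertexFiber v, Q.vertex x
  edge e := ∑ y ∈ c.edgeFiber e, Q.edge y
  ghost e := ∑ y ∈ c.edgeFiber e, Q.ghost y
  vertex_mul_self v := by rw [Q.sum_vertex_mul_sum_vertex, Finset.inter_self]
  vertex_mul_vertex v w h := by
    rw [Q.sum_vertex_mul_sum_vertex, Finset.disjoint_iff_inter_eq_empty.1, Finset.sum_empty]
    exact Finset.disjoint_left.2 fun x hv hw =>
      h ((c.mem_vertexFiber.1 hv).symm.trans (c.mem_vertexFiber.1 hw))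
  vertex_src_mul_edge e := by
    refine (Finset.mul_sum _ _ _).trans (Finset.sum_congr rfl fun y hy => ?_)
    rw [Q.sum_vertex_mul_edge, if_pos (by simp_all [c.vmap_s])]
  edge_mul_vertex_rng e := by
    refine (Finset.sum_mul _ _ _).trans (Finset.sum_congr rfl fun y hy => ?_)
    rw [Q.edge_mul_sum_vertex, if_pos (by simp_all [c.vmap_r])]
  vertex_rng_mul_ghost e := by
    refine (Finset.mul_sum _ _ _).trans (Finset.sum_congr rfl fun y hy => ?_)
    rw [Q.sum_vertex_mul_ghost, if_pos (by simp_all [c.vmap_r])]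
  ghost_mul_vertex_src e := by
    refine (Finset.sum_mul _ _ _).trans (Finset.sum_congr rfl fun y hy => ?_)
    rw [Q.ghost_mul_sum_vertex, if_pos (by simp_all [c.vmap_s])]
  ghost_mul_edge_self e := by
    rw [Q.sum_ghost_mul_sum_edge, Finset.inter_self, c.sum_edgeFiber_rng e Q.vertex]
  ghost_mul_edge e f h := by
    rw [Q.sum_ghost_mul_sum_edge, Finset.disjoint_iff_inter_eq_empty.1, Finset.sum_empty]
    exact Finset.disjoint_left.2 fun y he hf =>
      h ((c.mem_edgeFiber.1 he).symm.trans (c.mem_edgeFiber.1 hf))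
  ck2 v h1 h2 := by
    -- both sides regroup `∑ y y*` over the lifts `y` of the edges leaving `v`
    set Y := h1.toFinset.biUnion c.edgeFiber
    have hY : ∀ y, c.vmap (K.s y) = v → y ∈ Y := fun y hy => by simp_all [Y, c.vmap_s]
    simp only [c.sum_edge_mul_sum_ghost]
    rw [← c.sum_biUnion_edgeFiber, ← Finset.sum_fiberwise_of_maps_to (g := K.s)
      (t := c.vertexFiber v) fun y hy => by simp_all [Y, c.vmap_s]]
    refine Finset.sum_congr rfl fun x hx => ?_
    rw [c.mem_vertexFiber] at hx
    subst hx
    obtain ⟨y, hy : K.s y = x⟩ := c.nonempty_of_regular x h1 h2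
    refine Q.vertex_eq_edgeProj (fun y' => ?_)
      ⟨y, Finset.mem_filter.2 ⟨hY y (by rw [hy]), hy⟩⟩
    exact Finset.mem_filter.trans (and_iff_right_of_imp fun h => hY y' (by rw [h]))

theorem pull_edgeProj (T : Finset G.E) :
    (c.pull Q).edgeProj T = Q.edgeProj (T.biUnion c.edgeFiber) := by
  simp only [LeavittFamily.edgeProj, c.sum_biUnion_edgeFiber]
  exact Finset.sum_congr rfl fun e _ => c.sum_edge_mul_sum_ghost Q e

theorem sum_edgeFiber_edge_mul_vertex_rng (y : K.E) :
    (∑ y' ∈ c.edgeFiber (c.emap y), Q.edge y') * Q.vertex (K.r y) = Q.edge y := by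
  rw [Finset.sum_mul, Finset.sum_eq_single_of_mem y (c.mem_edgeFiber.2 rfl), Q.edge_mul_vertex_rng]
  intro y' hy' hne
  rw [Q.edge_mul_vertex,
    if_neg fun h => hne (c.rng_injOn_edgeFiber _ hy' (c.mem_edgeFiber.2 rfl) h)]

theorem vertex_rng_mul_sum_edgeFiber_ghost (y : K.E) :
    Q.vertex (K.r y) * (∑ y' ∈ c.edgeFiber (c.emap y), Q.ghost y') = Q.ghost y := by
  rw [Finset.mul_sum, Finset.sum_eq_single_of_mem y (c.mem_edgeFiber.2 rfl), Q.vertex_rng_mul_ghost]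
  intro y' hy' hne
  rw [Q.vertex_mul_ghost,
    if_neg fun h => hne (c.rng_injOn_edgeFiber _ hy' (c.mem_edgeFiber.2 rfl) h.symm)]

theorem sum_biUnion_edgeFiber_edge_mul_mul_ghost {P : LeavittFamily R G A} {q : K.V → A}
    (hq : ∀ v, ∑ x ∈ c.vertexFiber v, q x = P.vertex v) (T : Finset G.E) :
    ∑ y ∈ T.biUnion c.edgeFiber, P.edge (c.emap y) * q (K.r y) * P.ghost (c.emap y) =
      P.edgeProj T := by
  rw [c.sum_biUnion_edgeFiber]
  refine Finset.sum_congr rfl fun e _ => ?_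
  rw [Finset.sum_congr rfl fun y hy => by rw [c.mem_edgeFiber.1 hy], ← Finset.sum_mul,
    ← Finset.mul_sum, c.sum_edgeFiber_rng e q, hq, P.edge_mul_vertex_rng]

/-- Refines the Leavitt `G`-family `P` along `c` into a Leavitt `K`-family (`Splitting.family`). -/
structure Splitting (P : LeavittFamily R G A) where
  q : K.V → A
  q_mul_q : ∀ x y, q x * q y = if x = y then q x else 0
  sum_q : ∀ v, ∑ x ∈ c.vertexFiber v, q x = P.vertex v
  q_src_mul_edge : ∀ y, q (K.s y) * P.edge (c.emap y) = P.edge (c.emap y)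
  ghost_mul_q_src : ∀ y, P.ghost (c.emap y) * q (K.s y) = P.ghost (c.emap y)
  ck2 : ∀ x (h : {y | K.s y = x}.Finite), {y | K.s y = x}.Nonempty →
    q x = ∑ y ∈ h.toFinset, P.edge (c.emap y) * q (K.r y) * P.ghost (c.emap y)

namespace Splitting

variable {c} {P : LeavittFamily R G A} (σ : c.Splitting P)

theorem q_mul_self (x : K.V) : σ.q x * σ.q x = σ.q x := by
  rw [σ.q_mul_q, if_pos rfl]

theorem vertex_vmap_mul_q (x : K.V) : P.vertex (c.vmap x) * σ.q x = σ.q x := by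
  rw [← σ.sum_q, Finset.sum_mul, Finset.sum_eq_single_of_mem x (c.mem_vertexFiber.2 rfl),
    σ.q_mul_self]
  intro x' _ hne
  rw [σ.q_mul_q, if_neg hne]

noncomputable def family : LeavittFamily R K A where
  vertex := σ.q
  edge y := P.edge (c.emap y) * σ.q (K.r y)
  ghost y := σ.q (K.r y) * P.ghost (c.emap y)
  vertex_mul_self := σ.q_mul_self
  vertex_mul_vertex x y h := by rw [σ.q_mul_q, if_neg h]
  vertex_src_mul_edge y := by rw [← mul_assoc, σ.q_src_mul_edge]
  edge_mul_vertex_rng y := by rw [mul_assoc, σ.q_mul_self]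
  vertex_rng_mul_ghost y := by rw [← mul_assoc, σ.q_mul_self]
  ghost_mul_vertex_src y := by rw [mul_assoc, σ.ghost_mul_q_src]
  ghost_mul_edge_self y := by
    rw [mul_assoc, ← mul_assoc (P.ghost _), P.ghost_mul_edge_self, ← c.vmap_r, ← mul_assoc,
      mul_assoc (σ.q _), σ.vertex_vmap_mul_q, σ.q_mul_self]
  ghost_mul_edge y y' h := by
    rw [mul_assoc, ← mul_assoc (P.ghost _)]
    by_cases he : c.emap y = c.emap y'
    · have hr : K.r y ≠ K.r y' := fun hr =>
        h (c.rng_injOn_edgeFiber _ (c.mem_edgeFiber.2 he) (c.mem_edgeFiber.2 rfl) hr)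
      rw [he, P.ghost_mul_edge_self, ← c.vmap_r, σ.vertex_vmap_mul_q, σ.q_mul_q, if_neg hr]
    · rw [P.ghost_mul_edge _ _ he, zero_mul, mul_zero]
  ck2 x h1 h2 := by
    rw [σ.ck2 x h1 h2]
    refine Finset.sum_congr rfl fun y _ => ?_
    rw [← mul_assoc, mul_assoc (P.edge _) (σ.q _) (σ.q _), σ.q_mul_self]

theorem lift_comp_lift_pull :
    σ.family.lift.comp (c.pull (LeavittFamily.canonical R K)).lift = P.lift := by
  refine LPA.algHom_ext (fun v => ?_) (fun e => ?_) (fun e => ?_)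
  · simp [pull, family, σ.sum_q]
  · have h : ∑ y ∈ c.edgeFiber e, P.edge (c.emap y) * σ.q (K.r y) = P.edge e := by
      rw [Finset.sum_congr rfl fun y hy => by rw [c.mem_edgeFiber.1 hy], ← Finset.mul_sum,
        c.sum_edgeFiber_rng e σ.q, σ.sum_q, P.edge_mul_vertex_rng]
    simpa [pull, family] using h
  · have h : ∑ y ∈ c.edgeFiber e, σ.q (K.r y) * P.ghost (c.emap y) = P.ghost e := by
      rw [Finset.sum_congr rfl fun y hy => by rw [c.mem_edgeFiber.1 hy], ← Finset.sum_mul,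
        c.sum_edgeFiber_rng e σ.q, σ.sum_q, P.vertex_rng_mul_ghost]
    simpa [pull, family] using h

theorem comp_lift_eq_id (f : A →ₐ[R] LPA R K) (hq : ∀ x, f (σ.q x) = Xv R K x)
    (he : ∀ e, f (P.edge e) = ∑ y ∈ c.edgeFiber e, Xe R K y)
    (hg : ∀ e, f (P.ghost e) = ∑ y ∈ c.edgeFiber e, Xg R K y) :
    f.comp σ.family.lift = AlgHom.id R (LPA R K) := by
  refine LPA.algHom_ext (fun x => ?_) (fun y => ?_) (fun y => ?_)
  · simpa [family] using hq x
  · simpa [family, he, hq] using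
      c.sum_edgeFiber_edge_mul_vertex_rng (LeavittFamily.canonical R K) y
  · simpa [family, hg, hq] using
      c.vertex_rng_mul_sum_edgeFiber_ghost (LeavittFamily.canonical R K) y

end Splitting

end RangeCover

def edgesOutside (H : Set G.V) (v : G.V) : Set G.E := {e | G.s e = v ∧ G.r e ∉ H}

variable {G} {H S : Set G.V}

theorem finite_edgesOutside_of_mem_BH {v : G.V} (hv : v ∈ G.BH H) :
    (G.edgesOutside H v).Finite :=
  hv.2.2.1

variable (G H S)

noncomputable def quotCover (hH : G.Hereditary H) (hS : G.Saturated H) :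
    RangeCover (quotGraph G H S hH) G where
  vmap := Sum.elim Subtype.val Subtype.val
  emap := Sum.elim Subtype.val Subtype.val
  vmap_s := by rintro (y | y) <;> rfl
  vmap_r := by rintro (y | y) <;> rfl
  finite_vertexFiber := Set.finite_sumElim_val_fiber
  bijOn_r e := by
    refine ⟨by rintro (y | y) rfl <;> rfl, ?_, ?_⟩
    · rintro (y | y) hy (y' | y') hy' h
      · exact congrArg Sum.inl (Subtype.ext (hy.trans hy'.symm))
      · exact absurd h Sum.inl_ne_inr
      · exact absurd h Sum.inr_ne_inl
      · exact congrArg Sum.inr (Subtype.ext (hy.trans hy'.symm))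
    · rintro (⟨w, hw⟩ | ⟨w, hw⟩) (rfl : w = G.r e)
      · exact ⟨.inl ⟨e, hw⟩, rfl, rfl⟩
      · exact ⟨.inr ⟨e, hw⟩, rfl, rfl⟩
  nonempty_of_regular := by
    rintro (⟨u, hu⟩ | ⟨u, hu⟩) hfin hne
    · by_contra hemp
      refine hu (hS u hfin hne fun e he => by_contra fun hr => hemp ?_)
      exact ⟨.inl ⟨e, hr⟩, congrArg Sum.inl (Subtype.ext he)⟩
    · exact absurd hfin hu.1.2.1

variable {G H S} {hH : G.Hereditary H} {hS : G.Saturated H}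

theorem quotGraph_s_eq_inl_iff {u : G.V} (hu : u ∉ H) (y : (quotGraph G H S hH).E) :
    (quotGraph G H S hH).s y = .inl ⟨u, hu⟩ ↔
      (quotCover G H S hH hS).emap y ∈ G.edgesOutside H u := by
  rcases y with ⟨e, he⟩ | ⟨e, he⟩
  · exact Sum.inl_injective.eq_iff.trans (Subtype.ext_iff.trans (and_iff_left he).symm)
  · exact Sum.inl_injective.eq_iff.trans (Subtype.ext_iff.trans (and_iff_left he.1.1).symm)

theorem mem_biUnion_edgeFiber_edgesOutside_iff {u : G.V} (hu : u ∉ H)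
    (hF : (G.edgesOutside H u).Finite) (y : (quotGraph G H S hH).E) :
    y ∈ hF.toFinset.biUnion (quotCover G H S hH hS).edgeFiber ↔
      (quotGraph G H S hH).s y = .inl ⟨u, hu⟩ := by
  rw [quotGraph_s_eq_inl_iff (hS := hS) hu]
  simp

theorem sum_vertexFiber_quotCover {M : Type*} [AddCommMonoid M] (v : G.V)
    (f : (quotGraph G H S hH).V → M) :
    ∑ x ∈ (quotCover G H S hH hS).vertexFiber v, f x =
      (if h : v ∉ H then f (.inl ⟨v, h⟩) else 0) +
        (if h : v ∈ G.BH H ∧ v ∉ S then f (.inr ⟨v, h⟩) else 0) :=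
  Finset.sum_sumElim_val_fiber _ (fun _ => (quotCover G H S hH hS).mem_vertexFiber) f

end LPGraph

namespace LeavittFamily

open LPGraph

variable {R G} {H S : Set G.V} (hH : G.Hereditary H) {A : Type*} [Ring A] [Algebra R A]
  (P : LeavittFamily R G A)

theorem edgeProj_edgesOutside_mul_edge {u : G.V} (hF : (G.edgesOutside H u).Finite) {e : G.E}
    (he : e ∈ G.edgesOutside H u) : P.edgeProj hF.toFinset * P.edge e = P.edge e := by
  rw [edgeProj_mul_edge, if_pos (hF.mem_toFinset.2 he)]

theorem ghost_mul_edgeProj_edgesOutside {u : G.V} (hF : (G.edgesOutside H u).Finite) {e : G.E}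
    (he : e ∈ G.edgesOutside H u) : P.ghost e * P.edgeProj hF.toFinset = P.ghost e := by
  rw [ghost_mul_edgeProj, if_pos (hF.mem_toFinset.2 he)]

theorem vertex_mul_edgeProj_edgesOutside {u : G.V} (hF : (G.edgesOutside H u).Finite) :
    P.vertex u * P.edgeProj hF.toFinset = P.edgeProj hF.toFinset :=
  P.vertex_mul_edgeProj fun _ he => (hF.mem_toFinset.1 he).1

theorem edgeProj_edgesOutside_mul_vertex {u : G.V} (hF : (G.edgesOutside H u).Finite) :
    P.edgeProj hF.toFinset * P.vertex u = P.edgeProj hF.toFinset :=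
  P.edgeProj_mul_vertex fun _ he => (hF.mem_toFinset.1 he).1

variable (S)

/-- For `v ∈ B_H \ S` these are `v ↦ v - v^H` and `v' ↦ v^H`. -/
noncomputable def quotVertexProj : (quotGraph G H S hH).V → A
  | .inl u => if h : u.1 ∈ G.BH H ∧ u.1 ∉ S then
      P.edgeProj (finite_edgesOutside_of_mem_BH h.1).toFinset else P.vertex u.1
  | .inr u => P.vertex u.1 - P.edgeProj (finite_edgesOutside_of_mem_BH u.2.1).toFinset

variable {S} {hH}

theorem quotVertexProj_inl {u : G.V} (hu : u ∉ H) :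
    P.quotVertexProj S hH (.inl ⟨u, hu⟩) = if h : u ∈ G.BH H ∧ u ∉ S then
      P.edgeProj (finite_edgesOutside_of_mem_BH h.1).toFinset else P.vertex u :=
  rfl

theorem quotVertexProj_inr {u : G.V} (hu : u ∈ G.BH H ∧ u ∉ S) :
    P.quotVertexProj S hH (.inr ⟨u, hu⟩) =
      P.vertex u - P.edgeProj (finite_edgesOutside_of_mem_BH hu.1).toFinset :=
  rfl

theorem quotVertexProj_inl_mul_edge {u : G.V} (hu : u ∉ H) {e : G.E}
    (he : e ∈ G.edgesOutside H u) :
    P.quotVertexProj S hH (.inl ⟨u, hu⟩) * P.edge e = P.edge e := by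
  rw [quotVertexProj_inl]
  split_ifs with h
  · exact P.edgeProj_edgesOutside_mul_edge _ he
  · rw [← he.1, P.vertex_src_mul_edge]

theorem ghost_mul_quotVertexProj_inl {u : G.V} (hu : u ∉ H) {e : G.E}
    (he : e ∈ G.edgesOutside H u) :
    P.ghost e * P.quotVertexProj S hH (.inl ⟨u, hu⟩) = P.ghost e := by
  rw [quotVertexProj_inl]
  split_ifs with h
  · exact P.ghost_mul_edgeProj_edgesOutside _ he
  · rw [← he.1, P.ghost_mul_vertex_src]

theorem quotVertexProj_mul_self (x : (quotGraph G H S hH).V) :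
    P.quotVertexProj S hH x * P.quotVertexProj S hH x = P.quotVertexProj S hH x := by
  rcases x with ⟨u, hu⟩ | ⟨u, hu⟩
  · rw [quotVertexProj_inl]
    split_ifs
    exacts [P.edgeProj_mul_self _, P.vertex_mul_self u]
  · rw [quotVertexProj_inr, sub_mul, mul_sub, mul_sub, P.vertex_mul_self,
      P.vertex_mul_edgeProj_edgesOutside, P.edgeProj_edgesOutside_mul_vertex, P.edgeProj_mul_self,
      sub_self, sub_zero]

theorem vertex_vmap_mul_quotVertexProj (x : (quotGraph G H S hH).V) :
    P.vertex (Sum.elim Subtype.val Subtype.val x) * P.quotVertexProj S hH x =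
      P.quotVertexProj S hH x := by
  rcases x with ⟨u, hu⟩ | ⟨u, hu⟩
  · rw [quotVertexProj_inl]
    split_ifs
    exacts [P.vertex_mul_edgeProj_edgesOutside _, P.vertex_mul_self u]
  · rw [quotVertexProj_inr, Sum.elim_inr, mul_sub, P.vertex_mul_self,
      P.vertex_mul_edgeProj_edgesOutside]

theorem quotVertexProj_mul_vertex_vmap (x : (quotGraph G H S hH).V) :
    P.quotVertexProj S hH x * P.vertex (Sum.elim Subtype.val Subtype.val x) =
      P.quotVertexProj S hH x := by
  rcases x with ⟨u, hu⟩ | ⟨u, hu⟩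
  · rw [quotVertexProj_inl]
    split_ifs
    exacts [P.edgeProj_edgesOutside_mul_vertex _, P.vertex_mul_self u]
  · rw [quotVertexProj_inr, Sum.elim_inr, sub_mul, P.vertex_mul_self,
      P.edgeProj_edgesOutside_mul_vertex]

theorem quotVertexProj_inl_mul_inr {u : G.V} (hu : u ∉ H) (hu' : u ∈ G.BH H ∧ u ∉ S) :
    P.quotVertexProj S hH (.inl ⟨u, hu⟩) * P.quotVertexProj S hH (.inr ⟨u, hu'⟩) = 0 := by
  rw [quotVertexProj_inl, dif_pos hu', quotVertexProj_inr, mul_sub,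
    P.edgeProj_edgesOutside_mul_vertex, P.edgeProj_mul_self, sub_self]

theorem quotVertexProj_inr_mul_inl {u : G.V} (hu : u ∉ H) (hu' : u ∈ G.BH H ∧ u ∉ S) :
    P.quotVertexProj S hH (.inr ⟨u, hu'⟩) * P.quotVertexProj S hH (.inl ⟨u, hu⟩) = 0 := by
  rw [quotVertexProj_inl, dif_pos hu', quotVertexProj_inr, sub_mul,
    P.vertex_mul_edgeProj_edgesOutside, P.edgeProj_mul_self, sub_self]

theorem quotVertexProj_mul (x y : (quotGraph G H S hH).V) :
    P.quotVertexProj S hH x * P.quotVertexProj S hH y =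
      if x = y then P.quotVertexProj S hH x else 0 := by
  split_ifs with hxy
  · rw [hxy, quotVertexProj_mul_self]
  by_cases hv : Sum.elim Subtype.val Subtype.val x = Sum.elim Subtype.val Subtype.val y
  · rcases x with ⟨u, hu⟩ | ⟨u, hu⟩ <;> rcases y with ⟨w, hw⟩ | ⟨w, hw⟩ <;>
      obtain rfl : u = w := hv
    · exact absurd rfl hxy
    · exact P.quotVertexProj_inl_mul_inr hu hw
    · exact P.quotVertexProj_inr_mul_inl hw hu
    · exact absurd rfl hxy
  · rw [← quotVertexProj_mul_vertex_vmap, ← P.vertex_vmap_mul_quotVertexProj y, mul_assoc,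
      ← mul_assoc (P.vertex _), P.vertex_mul_vertex _ _ hv, zero_mul, mul_zero]

end LeavittFamily

namespace LeavittFamily

open LPGraph

variable {R G} {H S : Set G.V} {hH : G.Hereditary H} {A : Type*} [Ring A] [Algebra R A]
  {P : LeavittFamily R G A}

theorem vertex_eq_edgeProj_edgesOutside (hPH : ∀ v ∈ H, P.vertex v = 0) {u : G.V}
    (hreg : {e | G.s e = u}.Finite) (hF : (G.edgesOutside H u).Finite)
    (hne : (G.edgesOutside H u).Nonempty) : P.vertex u = P.edgeProj hF.toFinset := by
  rw [P.ck2 u hreg (hne.mono fun _ he => he.1), edgeProj]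
  refine (Finset.sum_subset (fun e he => hreg.mem_toFinset.2 (hF.mem_toFinset.1 he).1)
    fun e he hne => ?_).symm
  have hr : G.r e ∈ H :=
    by_contra fun hr => hne (hF.mem_toFinset.2 ⟨hreg.mem_toFinset.1 he, hr⟩)
  rw [← P.edge_mul_vertex_rng, hPH _ hr, mul_zero, zero_mul]

variable (hPH : ∀ v ∈ H, P.vertex v = 0)
  (hPS : ∀ v ∈ S, ∀ hF : (G.edgesOutside H v).Finite, P.vertex v = P.edgeProj hF.toFinset)
include hPH

theorem sum_vertexFiber_quotVertexProj (hS : G.Saturated H) (v : G.V) :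
    ∑ x ∈ (quotCover G H S hH hS).vertexFiber v, P.quotVertexProj S hH x = P.vertex v := by
  rw [sum_vertexFiber_quotCover]
  by_cases hv : v ∈ H
  · rw [dif_neg (not_not.2 hv), dif_neg fun h => h.1.1 hv, hPH v hv, add_zero]
  rw [dif_pos hv, quotVertexProj_inl]
  by_cases hc : v ∈ G.BH H ∧ v ∉ S
  · rw [dif_pos hc, dif_pos hc, quotVertexProj_inr, add_sub_cancel]
  · rw [dif_neg hc, dif_neg hc, add_zero]

include hPS

theorem quotVertexProj_inl_eq_edgeProj {u : G.V} (hu : u ∉ H) (hF : (G.edgesOutside H u).Finite)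
    (hne : (G.edgesOutside H u).Nonempty) :
    P.quotVertexProj S hH (.inl ⟨u, hu⟩) = P.edgeProj hF.toFinset := by
  rw [quotVertexProj_inl]
  split_ifs with hc
  · rfl
  by_cases huS : u ∈ S
  · exact hPS u huS hF
  have hreg : {e | G.s e = u}.Finite := by_contra fun hinf => hc ⟨⟨hu, hinf, hF, hne⟩, huS⟩
  exact vertex_eq_edgeProj_edgesOutside hPH hreg hF hne

variable (hH) in
noncomputable def quotSplitting (hS : G.Saturated H) : (quotCover G H S hH hS).Splitting P where
  q := P.quotVertexProj S hH
  q_mul_q := P.quotVertexProj_mul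
  sum_q := sum_vertexFiber_quotVertexProj hPH hS
  q_src_mul_edge := by
    rintro (⟨e, he⟩ | ⟨e, he⟩)
    exacts [P.quotVertexProj_inl_mul_edge _ ⟨rfl, he⟩,
      P.quotVertexProj_inl_mul_edge _ ⟨rfl, he.1.1⟩]
  ghost_mul_q_src := by
    rintro (⟨e, he⟩ | ⟨e, he⟩)
    exacts [P.ghost_mul_quotVertexProj_inl _ ⟨rfl, he⟩,
      P.ghost_mul_quotVertexProj_inl _ ⟨rfl, he.1.1⟩]
  ck2 := by
    rintro (⟨u, hu⟩ | ⟨u, hu⟩) h1 ⟨y, hy⟩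
    · have hF : (G.edgesOutside H u).Finite := (h1.image (quotCover G H S hH hS).emap).subset
        fun e he => ⟨.inl ⟨e, he.2⟩, (quotGraph_s_eq_inl_iff (hS := hS) _ _).2 he, rfl⟩
      have hset : h1.toFinset = hF.toFinset.biUnion (quotCover G H S hH hS).edgeFiber :=
        Finset.ext fun y =>
          h1.mem_toFinset.trans (mem_biUnion_edgeFiber_edgesOutside_iff hu hF y).symm
      rw [hset, (quotCover G H S hH hS).sum_biUnion_edgeFiber_edge_mul_mul_ghost
          (sum_vertexFiber_quotVertexProj hPH hS),
        quotVertexProj_inl_eq_edgeProj hPH hPS hu hF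
          ⟨_, (quotGraph_s_eq_inl_iff (hS := hS) hu y).1 hy⟩]
    · rcases y with y | y <;> exact absurd hy Sum.inl_ne_inr

end LeavittFamily

theorem vH_eq_sub_edgeProj {H : Set G.V} {v : G.V} (hF : (G.edgesOutside H v).Finite) :
    vH R G H v = Xv R G v - (LeavittFamily.canonical R G).edgeProj hF.toFinset := by
  rw [vH, LeavittFamily.edgeProj, ← finsum_mem_coe_finset, hF.coe_toFinset]
  rfl

namespace IHS

variable (H S : Set G.V)

noncomputable abbrev mkAlgHom : LPA R G →ₐ[R] QuotLPA R G (IHS R G H S) := RingQuot.mkAlgHom R _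

variable {R G H S}

theorem mkAlgHom_eq_zero {x : LPA R G} (hx : x ∈ IHS R G H S) : mkAlgHom R G H S x = 0 :=
  (RingQuot.mkAlgHom_rel R (by rwa [sub_zero])).trans (map_zero _)

variable {B : Type*} [Ring B] [Algebra R B] (f : LPA R G →ₐ[R] B)

theorem map_eq_zero_of_mem (hfH : ∀ v ∈ H, f (Xv R G v) = 0)
    (hfS : ∀ v ∈ S, f (vH R G H v) = 0) {x : LPA R G} (hx : x ∈ IHS R G H S) : f x = 0 := by
  refine (TwoSidedIdeal.mem_ker f.toRingHom).1 (TwoSidedIdeal.mem_span_iff.1 hx _ ?_)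
  rintro _ (⟨v, hv, rfl⟩ | ⟨v, hv, rfl⟩)
  exacts [(TwoSidedIdeal.mem_ker _).2 (hfH v hv), (TwoSidedIdeal.mem_ker _).2 (hfS v hv)]

noncomputable def liftAlgHom (hfH : ∀ v ∈ H, f (Xv R G v) = 0)
    (hfS : ∀ v ∈ S, f (vH R G H v) = 0) : QuotLPA R G (IHS R G H S) →ₐ[R] B :=
  RingQuot.liftAlgHom R ⟨f, fun a b h => sub_eq_zero.1 <| by
    rw [← map_sub]; exact map_eq_zero_of_mem f hfH hfS h⟩

@[simp] theorem liftAlgHom_mkAlgHom (hfH : ∀ v ∈ H, f (Xv R G v) = 0)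
    (hfS : ∀ v ∈ S, f (vH R G H v) = 0) (x : LPA R G) :
    liftAlgHom f hfH hfS (mkAlgHom R G H S x) = f x :=
  RingQuot.liftAlgHom_mkAlgHom_apply _ _ _ _

variable (R G H S)

noncomputable def family : LeavittFamily R G (QuotLPA R G (IHS R G H S)) :=
  (LeavittFamily.canonical R G).map (mkAlgHom R G H S)

theorem family_vertex_of_mem (v : G.V) (hv : v ∈ H) : (family R G H S).vertex v = 0 :=
  mkAlgHom_eq_zero (TwoSidedIdeal.subset_span (Or.inl ⟨v, hv, rfl⟩))

theorem family_vertex_eq_edgeProj (v : G.V) (hv : v ∈ S) (hF : (G.edgesOutside H v).Finite) :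
    (family R G H S).vertex v = (family R G H S).edgeProj hF.toFinset := by
  rw [family, LeavittFamily.map_edgeProj, LeavittFamily.map_vertex, Function.comp_apply]
  refine RingQuot.mkAlgHom_rel R ?_
  rw [LeavittFamily.canonical_vertex, ← vH_eq_sub_edgeProj]
  exact TwoSidedIdeal.subset_span (Or.inr ⟨v, hv, rfl⟩)

noncomputable def splitting (hH : G.Hereditary H) (hS : G.Saturated H) :
    (G.quotCover H S hH hS).Splitting (family R G H S) :=
  LeavittFamily.quotSplitting (A := QuotLPA R G (IHS R G H S)) hH
    (family_vertex_of_mem R G H S) (family_vertex_eq_edgeProj R G H S) hS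

end IHS

section QuotGraphHom

open LPGraph

variable (H S : Set G.V) (hH : G.Hereditary H) (hS : G.Saturated H)

noncomputable def quotGraphHom : LPA R G →ₐ[R] LPA R (quotGraph G H S hH) :=
  ((quotCover G H S hH hS).pull (LeavittFamily.canonical R _)).lift

variable {R G H S hH hS}

theorem quotGraphHom_Xv (v : G.V) :
    quotGraphHom R G H S hH hS (Xv R G v) =
      (if h : v ∉ H then Xv R (quotGraph G H S hH) (.inl ⟨v, h⟩) else 0) +
        (if h : v ∈ G.BH H ∧ v ∉ S then Xv R (quotGraph G H S hH) (.inr ⟨v, h⟩) else 0) := by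
  simp only [quotGraphHom, LeavittFamily.lift_Xv, RangeCover.pull,
    LeavittFamily.canonical_vertex]
  exact sum_vertexFiber_quotCover v _

theorem quotGraphHom_edgeProj {u : G.V} (hu : u ∉ H) (hF : (G.edgesOutside H u).Finite)
    (hne : (G.edgesOutside H u).Nonempty) :
    quotGraphHom R G H S hH hS ((LeavittFamily.canonical R G).edgeProj hF.toFinset) =
      Xv R (quotGraph G H S hH) (.inl ⟨u, hu⟩) := by
  obtain ⟨e, he⟩ := hne
  rw [quotGraphHom, LeavittFamily.lift_edgeProj, RangeCover.pull_edgeProj]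
  refine ((LeavittFamily.canonical R _).vertex_eq_edgeProj
    (mem_biUnion_edgeFiber_edgesOutside_iff hu hF) ⟨.inl ⟨e, he.2⟩, ?_⟩).symm
  exact (mem_biUnion_edgeFiber_edgesOutside_iff hu hF _).2 (congrArg Sum.inl (Subtype.ext he.1))

variable (hS) (hSB : S ⊆ G.BH H)

noncomputable def quotGraphHomIHS :
    QuotLPA R G (IHS R G H S) →ₐ[R] LPA R (quotGraph G H S hH) :=
  IHS.liftAlgHom (quotGraphHom R G H S hH hS)
    (fun v hv => by
      rw [quotGraphHom_Xv, dif_neg (not_not.2 hv), dif_neg fun h => h.1.1 hv, add_zero])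
    (fun v hv => by
      have hF := finite_edgesOutside_of_mem_BH (hSB hv)
      rw [vH_eq_sub_edgeProj R G hF, map_sub, quotGraphHom_Xv, dif_pos (hSB hv).1,
        dif_neg fun h => h.2 hv, add_zero, quotGraphHom_edgeProj (hSB hv).1 hF (hSB hv).2.2.2,
        sub_self])

theorem quotGraphHomIHS_comp_mkAlgHom :
    (quotGraphHomIHS hS hSB).comp (IHS.mkAlgHom R G H S) = quotGraphHom R G H S hH hS :=
  AlgHom.ext (IHS.liftAlgHom_mkAlgHom _ _ _)

theorem quotGraphHomIHS_splitting_q (x : (quotGraph G H S hH).V) :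
    quotGraphHomIHS hS hSB ((IHS.splitting R G H S hH hS).q x) = Xv R (quotGraph G H S hH) x := by
  change quotGraphHomIHS hS hSB ((IHS.family R G H S).quotVertexProj S hH x) = _
  have hv (v : G.V) : quotGraphHomIHS hS hSB ((IHS.family R G H S).vertex v) =
      quotGraphHom R G H S hH hS (Xv R G v) := IHS.liftAlgHom_mkAlgHom _ _ _ _
  have hp (v : G.V) (hF : (G.edgesOutside H v).Finite) :
      quotGraphHomIHS hS hSB ((IHS.family R G H S).edgeProj hF.toFinset) =
        quotGraphHom R G H S hH hS ((LeavittFamily.canonical R G).edgeProj hF.toFinset) := by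
    rw [IHS.family, LeavittFamily.map_edgeProj]
    exact IHS.liftAlgHom_mkAlgHom _ _ _ _
  rcases x with ⟨u, hu⟩ | ⟨u, hu⟩
  · rw [LeavittFamily.quotVertexProj_inl]
    split_ifs with hc
    · rw [hp, quotGraphHom_edgeProj hu _ hc.1.2.2.2]
    · rw [hv, quotGraphHom_Xv, dif_pos hu, dif_neg hc, add_zero]
  · rw [LeavittFamily.quotVertexProj_inr, map_sub, hv, hp, quotGraphHom_Xv, dif_pos hu.1.1,
      dif_pos hu, quotGraphHom_edgeProj hu.1.1 _ hu.1.2.2.2, add_sub_cancel_left]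

noncomputable def quotEquiv :
    QuotLPA R G (IHS R G H S) ≃ₐ[R] LPA R (quotGraph G H S hH) :=
  AlgEquiv.ofAlgHom (quotGraphHomIHS hS hSB) (IHS.splitting R G H S hH hS).family.lift
    ((IHS.splitting R G H S hH hS).comp_lift_eq_id _ (quotGraphHomIHS_splitting_q hS hSB)
      (fun e => (IHS.liftAlgHom_mkAlgHom _ _ _ (Xe R G e)).trans (LeavittFamily.lift_Xe _ e))
      (fun e => (IHS.liftAlgHom_mkAlgHom _ _ _ (Xg R G e)).trans (LeavittFamily.lift_Xg _ e)))
    (RingQuot.ringQuot_ext' _ _ _ <| by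
      rw [AlgHom.comp_assoc, quotGraphHomIHS_comp_mkAlgHom, quotGraphHom,
        RangeCover.Splitting.lift_comp_lift_pull, IHS.family, LeavittFamily.lift_map,
        LeavittFamily.lift_canonical]
      rfl)

end QuotGraphHom

/-- `L_R(E)/I(H,S)` is isomorphic as an `R`-algebra to the Leavitt path algebra of the
quotient graph `E/(H,S)`. -/
theorem quotient_IHS_iso (G : LPGraph) (R : Type) [CommRing R] (H S : Set G.V)
    (hAdm : G.Admissible H S) :
    Nonempty (QuotLPA R G (IHS R G H S) ≃ₐ[R] LPA R (quotGraph G H S hAdm.1)) :=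
  ⟨quotEquiv hAdm.2.1 hAdm.2.2⟩
end
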